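/- arXiv:1304.1909 — 4 statements merged into one kernel-verified Lean document; each statement's English description precedes it below -/
import Mathlib

section
/- Let uv and st be two distinct edges of a network G, and for λ∈[0,1] let p(λ)=(1−λ)u+λv and φ(λ)=max_{q∈st} d(p(λ),q). Let ū, v̄ be the farthest points on st from u and v respectively, and t̄, s̄ the farthest points on uv from t and s, with t̄ lying between u and s̄. Then φ(λ) = λw_uv + d(u,ū) if p(λ)∈u t̄; φ(λ) = d(t̄,ū) (constant) if p(λ)∈t̄ s̄; and φ(λ) = (1−λ)w_uv + d(v,v̄) if p(λ)∈s̄ v. -/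
/-!
The distance from `p(λ)` to the point at parameter `μ` of `st` is `min (d_s + μ w₂) (d_t + (1 - μ) w₂)`,
where `d_s = d(p(λ), s)` and `d_t = d(p(λ), t)`; since `|d_s - d_t| ≤ w₂`, its maximum over `μ` is
`(d_s + d_t + w₂) / 2`. Each of `d_s`, `d_t` is the minimum of a route through `u` and a route through `v`,
and the crossing parameters `λ_s̄`, `λ_t̄` say which route is shorter; the three regimes are the three
possible combinations allowed by `λ_t̄ ≤ λ_s̄`.
-/

open Set

lemma isGreatest_min_edge_dist {a b w : ℝ} (hw : 0 < w) (hab : |a - b| ≤ w) :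
    IsGreatest {y : ℝ | ∃ mu ∈ Icc (0:ℝ) 1, y = min (a + mu * w) (b + (1 - mu) * w)}
      ((a + b + w) / 2) := by
  rw [abs_le] at hab
  constructor
  · -- the two routes have equal length at this parameter
    refine ⟨(b - a + w) / (2 * w), ⟨div_nonneg (by linarith) (by positivity), ?_⟩, ?_⟩
    · rw [div_le_one (by positivity)]
      linarith
    · have hleft : a + (b - a + w) / (2 * w) * w = (a + b + w) / 2 := by
        field_simp
        ring
      have hright : b + (1 - (b - a + w) / (2 * w)) * w = (a + b + w) / 2 := by
        field_simp
        ring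
      rw [hleft, hright, min_self]
  · rintro y ⟨mu, -, rfl⟩
    linarith [min_le_left (a + mu * w) (b + (1 - mu) * w),
      min_le_right (a + mu * w) (b + (1 - mu) * w)]

lemma min_edge_dist_eq_left {lam a b w : ℝ} (hw : 0 < w) (h : lam ≤ (b - a + w) / (2 * w)) :
    min (lam * w + a) ((1 - lam) * w + b) = lam * w + a := by
  rw [le_div_iff₀ (by positivity)] at h
  exact min_eq_left (by linarith)

lemma min_edge_dist_eq_right {lam a b w : ℝ} (hw : 0 < w) (h : (b - a + w) / (2 * w) ≤ lam) :
    min (lam * w + a) ((1 - lam) * w + b) = (1 - lam) * w + b := by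
  rw [div_le_iff₀ (by positivity)] at h
  exact min_eq_right (by linarith)

lemma isGreatest_edge_to_edge_dist (lam : ℝ) {dus dut dvs dvt w1 w2 : ℝ} (hw2 : 0 < w2)
    (htriu : |dus - dut| ≤ w2) (htriv : |dvs - dvt| ≤ w2) :
    IsGreatest {y : ℝ | ∃ mu ∈ Icc (0:ℝ) 1, y =
        min (min (lam * w1 + dus + mu * w2) (lam * w1 + dut + (1 - mu) * w2))
            (min ((1 - lam) * w1 + dvs + mu * w2) ((1 - lam) * w1 + dvt + (1 - mu) * w2))}
      ((min (lam * w1 + dus) ((1 - lam) * w1 + dvs) +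
          min (lam * w1 + dut) ((1 - lam) * w1 + dvt) + w2) / 2) := by
  have hdist : ∀ mu : ℝ,
      min (min (lam * w1 + dus + mu * w2) (lam * w1 + dut + (1 - mu) * w2))
          (min ((1 - lam) * w1 + dvs + mu * w2) ((1 - lam) * w1 + dvt + (1 - mu) * w2)) =
        min (min (lam * w1 + dus) ((1 - lam) * w1 + dvs) + mu * w2)
          (min (lam * w1 + dut) ((1 - lam) * w1 + dvt) + (1 - mu) * w2) := fun mu => by
    rw [min_min_min_comm, min_add_add_right, min_add_add_right]
  simp_rw [hdist]
  refine isGreatest_min_edge_dist hw2 ((abs_min_sub_min_le_max _ _ _ _).trans ?_)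
  simpa [add_sub_add_left_eq_sub] using And.intro htriu htriv

/-- Encoding: `dus = d(u,s)` and similarly, `w1 = w_uv`, `w2 = w_st`; `t̄` and `s̄` are the points of
`uv` at parameters `(dvt - dut + w1)/(2*w1)` and `(dvs - dus + w1)/(2*w1)`. -/
theorem edge_to_edge_farthest_distance_general (dus dut dvs dvt w1 w2 : ℝ)
    (hw1 : 0 < w1) (hw2 : 0 < w2)
    (htriu : |dus - dut| ≤ w2) (htriv : |dvs - dvt| ≤ w2)
    (horder : (dvt - dut + w1) / (2 * w1) ≤ (dvs - dus + w1) / (2 * w1)) :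
    ∀ lam ∈ Icc (0:ℝ) 1,
      (lam ≤ (dvt - dut + w1) / (2 * w1) →
        IsGreatest {y : ℝ | ∃ mu ∈ Icc (0:ℝ) 1, y =
            min (min (lam * w1 + dus + mu * w2) (lam * w1 + dut + (1 - mu) * w2))
                (min ((1 - lam) * w1 + dvs + mu * w2) ((1 - lam) * w1 + dvt + (1 - mu) * w2))}
          (lam * w1 + (dus + w2 + dut) / 2)) ∧
      (lam ∈ Icc ((dvt - dut + w1) / (2 * w1)) ((dvs - dus + w1) / (2 * w1)) →
        IsGreatest {y : ℝ | ∃ mu ∈ Icc (0:ℝ) 1, y =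
            min (min (lam * w1 + dus + mu * w2) (lam * w1 + dut + (1 - mu) * w2))
                (min ((1 - lam) * w1 + dvs + mu * w2) ((1 - lam) * w1 + dvt + (1 - mu) * w2))}
          ((dvt - dut + w1) / (2 * w1) * w1 + (dus + w2 + dut) / 2)) ∧
      ((dvs - dus + w1) / (2 * w1) ≤ lam →
        IsGreatest {y : ℝ | ∃ mu ∈ Icc (0:ℝ) 1, y =
            min (min (lam * w1 + dus + mu * w2) (lam * w1 + dut + (1 - mu) * w2))
                (min ((1 - lam) * w1 + dvs + mu * w2) ((1 - lam) * w1 + dvt + (1 - mu) * w2))}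
          ((1 - lam) * w1 + (dvs + w2 + dvt) / 2)) := by
  intro lam _
  have hfar := isGreatest_edge_to_edge_dist lam (w1 := w1) hw2 htriu htriv
  refine ⟨fun hlam => ?_, fun hlam => ?_, fun hlam => ?_⟩
  · rw [min_edge_dist_eq_left hw1 (hlam.trans horder), min_edge_dist_eq_left hw1 hlam] at hfar
    convert hfar using 1
    ring
  · rw [min_edge_dist_eq_left hw1 hlam.2, min_edge_dist_eq_right hw1 hlam.1] at hfar
    convert hfar using 1
    field_simp
    ring
  · rw [min_edge_dist_eq_right hw1 hlam, min_edge_dist_eq_right hw1 (horder.trans hlam)] at hfar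
    convert hfar using 1
    ring

/-- Lemma 3 (Frank): the farthest distance `phi lam` from the point `p lam` on edge `uv` to
the edge `st` (distinct from `uv`).  Distances from the four endpoints are
`dus = d(u,s)`, `dut = d(u,t)`, `dvs = d(v,s)`, `dvt = d(v,t)`; edge weights `w1 = w_uv`,
`w2 = w_st`.  The farthest point `t̄` on `uv` from `t` sits at parameter
`lamt = (dvt - dut + w1)/(2*w1)` and `s̄` at `lams = (dvs - dus + w1)/(2*w1)`;
`t̄ ∈ u s̄` means `lamt ≤ lams`.  Then `phi` is ascending with slope `w1` up to `t̄`
with `phi lam = lam*w1 + d(u,ū)`, constant `d(t̄,ū)` on `t̄ s̄`, and descending after `s̄`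
with `phi lam = (1-lam)*w1 + d(v,v̄)`, where `d(u,ū) = (dus + w2 + dut)/2` and
`d(v,v̄) = (dvs + w2 + dvt)/2`. -/
theorem edge_to_edge_farthest_distance (dus dut dvs dvt w1 w2 : ℝ)
    (hw1 : 0 < w1) (hw2 : 0 < w2)
    (h1 : 0 ≤ dus) (h2 : 0 ≤ dut) (h3 : 0 ≤ dvs) (h4 : 0 ≤ dvt)
    (htriu : |dus - dut| ≤ w2) (htriv : |dvs - dvt| ≤ w2)
    (htris : |dus - dvs| ≤ w1) (htrit : |dut - dvt| ≤ w1)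
    (horder : (dvt - dut + w1) / (2 * w1) ≤ (dvs - dus + w1) / (2 * w1)) :
    ∀ lam ∈ Icc (0:ℝ) 1,
      (lam ≤ (dvt - dut + w1) / (2 * w1) →
        IsGreatest {y : ℝ | ∃ mu ∈ Icc (0:ℝ) 1, y =
            min (min (lam * w1 + dus + mu * w2) (lam * w1 + dut + (1 - mu) * w2))
                (min ((1 - lam) * w1 + dvs + mu * w2) ((1 - lam) * w1 + dvt + (1 - mu) * w2))}
          (lam * w1 + (dus + w2 + dut) / 2)) ∧
      (lam ∈ Icc ((dvt - dut + w1) / (2 * w1)) ((dvs - dus + w1) / (2 * w1)) →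
        IsGreatest {y : ℝ | ∃ mu ∈ Icc (0:ℝ) 1, y =
            min (min (lam * w1 + dus + mu * w2) (lam * w1 + dut + (1 - mu) * w2))
                (min ((1 - lam) * w1 + dvs + mu * w2) ((1 - lam) * w1 + dvt + (1 - mu) * w2))}
          ((dvt - dut + w1) / (2 * w1) * w1 + (dus + w2 + dut) / 2)) ∧
      ((dvs - dus + w1) / (2 * w1) ≤ lam →
        IsGreatest {y : ℝ | ∃ mu ∈ Icc (0:ℝ) 1, y =
            min (min (lam * w1 + dus + mu * w2) (lam * w1 + dut + (1 - mu) * w2))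
                (min ((1 - lam) * w1 + dvs + mu * w2) ((1 - lam) * w1 + dvt + (1 - mu) * w2))}
          ((1 - lam) * w1 + (dvs + w2 + dvt) / 2)) :=
  edge_to_edge_farthest_distance_general dus dut dvs dvt w1 w2 hw1 hw2 htriu htriv horder
end

section
/- Let uv be an edge of a network G with weight w_uv, let c be the midpoint of uv, let ū be the farthest point on uv from u, and v̄ the farthest point on uv from v. Then ū lies between c and v, v̄ lies between u and c, w_{uv̄}=w_{v ū}, and for p(λ)=(1−λ)u+λv the function φ(λ)=max_{q∈uv} d(p(λ),q) equals (w_uv+d(u,v))/2 when p(λ)∈u v̄ or p(λ)∈ū v, equals (1−λ)w_uv when p(λ)∈v̄ c, and equals λw_uv when p(λ)∈c ū. -/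
open Set

/-!
The distance from `p(λ)` to `q(μ)` is the least of the direct length `|λ - μ| w` and the two
detours through the rest of the network. The direct length and the detour on the other side of
the pair always add up to `w + d(u,v)`, the length of the cycle formed by the edge and a shortest
`u`–`v` path, so no point is farther than `(w + d(u,v))/2`; this bound is attained at the point
antipodal to `p(λ)` on that cycle, `μ = λ ± (w + d(u,v))/(2w)`, whenever it lies on the edge.
Otherwise the farthest point is the far endpoint. The reflection `λ ↦ 1 - λ` swaps the two halves
of the edge. In these coordinates `v̄ = (w - d(u,v))/(2w)` and `ū = (w + d(u,v))/(2w)`.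
-/

/-- The network distance between `p(lam)` and `p(mu)` on an edge of weight `w` whose endpoints are
at network distance `duv`: along the edge, or leaving through one endpoint and coming back
through the other. -/
noncomputable def edgeSelfDist (w duv lam mu : ℝ) : ℝ :=
  min (|lam - mu| * w) (min (lam * w + duv + (1 - mu) * w) ((1 - lam) * w + duv + mu * w))

def edgeSelfDistances (w duv lam : ℝ) : Set ℝ :=
  {y | ∃ mu ∈ Icc (0:ℝ) 1, y = edgeSelfDist w duv lam mu}

section

variable {w duv lam mu : ℝ}

theorem edgeSelfDist_one_sub_one_sub (w duv lam mu : ℝ) :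
    edgeSelfDist w duv (1 - lam) (1 - mu) = edgeSelfDist w duv lam mu := by
  unfold edgeSelfDist
  rw [show 1 - lam - (1 - mu) = -(lam - mu) by ring, abs_neg, min_comm (_ + _ + _)]
  ring_nf

theorem edgeSelfDistances_one_sub (w duv lam : ℝ) :
    edgeSelfDistances w duv (1 - lam) = edgeSelfDistances w duv lam := by
  have key : ∀ lam, edgeSelfDistances w duv (1 - lam) ⊆ edgeSelfDistances w duv lam := by
    rintro lam y ⟨mu, ⟨hmu0, hmu1⟩, rfl⟩
    refine ⟨1 - mu, ⟨by linarith, by linarith⟩, ?_⟩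
    rw [← edgeSelfDist_one_sub_one_sub, sub_sub_cancel]
  refine (key lam).antisymm ?_
  simpa only [sub_sub_cancel] using key (1 - lam)

theorem edgeSelfDist_le_half (w duv lam mu : ℝ) : edgeSelfDist w duv lam mu ≤ (w + duv) / 2 := by
  unfold edgeSelfDist
  rcases le_total lam mu with h | h
  · rw [abs_of_nonpos (sub_nonpos.2 h)]
    refine (min_le_min_left _ (min_le_left _ _)).trans (min_le_of_add_le_two_nsmul ?_)
    rw [two_nsmul]
    linarith
  · rw [abs_of_nonneg (sub_nonneg.2 h)]
    refine (min_le_min_left _ (min_le_right _ _)).trans (min_le_of_add_le_two_nsmul ?_)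
    rw [two_nsmul]
    linarith

theorem edgeSelfDist_le_one_sub_mul (hw : 0 ≤ w) (hlam : lam ≤ 1 / 2) (hmu : mu ∈ Icc (0:ℝ) 1) :
    edgeSelfDist w duv lam mu ≤ (1 - lam) * w :=
  (min_le_left _ _).trans <| mul_le_mul_of_nonneg_right
    (abs_sub_le_iff.2 ⟨by linarith [hmu.1], by linarith [hmu.2]⟩) hw

theorem edgeSelfDist_one (hlam : lam ≤ 1) (hwd : 0 ≤ w + duv) (h : w - duv ≤ lam * (2 * w)) :
    edgeSelfDist w duv lam 1 = (1 - lam) * w := by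
  unfold edgeSelfDist
  rw [abs_of_nonpos (by linarith), neg_sub]
  exact min_eq_left (le_min (by linarith) (by linarith))

theorem edgeSelfDist_antipodal (hw : 0 < w) (hwd : 0 ≤ w + duv) :
    edgeSelfDist w duv lam (lam + (w + duv) / (2 * w)) = (w + duv) / 2 := by
  have hs : (w + duv) / (2 * w) * w = (w + duv) / 2 := by field_simp
  unfold edgeSelfDist
  rw [show lam - (lam + (w + duv) / (2 * w)) = -((w + duv) / (2 * w)) by ring, abs_neg,
    abs_of_nonneg (by positivity), min_eq_left (le_min (by linarith) (by linarith)), hs]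

theorem vbar_eq_one_sub_ubar (hw : w ≠ 0) :
    (w - duv) / (2 * w) = 1 - (w + duv) / (2 * w) := by
  field_simp
  ring

theorem isGreatest_edgeSelfDistances_half_of_le (hw : 0 < w) (hwd : 0 ≤ w + duv)
    (hlam0 : 0 ≤ lam) (hlam : lam ≤ (w - duv) / (2 * w)) :
    IsGreatest (edgeSelfDistances w duv lam) ((w + duv) / 2) := by
  rw [vbar_eq_one_sub_ubar hw.ne'] at hlam
  have hs0 : 0 ≤ (w + duv) / (2 * w) := by positivity
  refine ⟨⟨lam + (w + duv) / (2 * w), ⟨by linarith, by linarith⟩, ?_⟩, ?_⟩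
  · exact (edgeSelfDist_antipodal hw hwd).symm
  · rintro y ⟨mu, -, rfl⟩
    exact edgeSelfDist_le_half w duv lam mu

theorem isGreatest_edgeSelfDistances_half_of_ge (hw : 0 < w) (hwd : 0 ≤ w + duv)
    (hlam1 : lam ≤ 1) (hlam : (w + duv) / (2 * w) ≤ lam) :
    IsGreatest (edgeSelfDistances w duv lam) ((w + duv) / 2) := by
  rw [← edgeSelfDistances_one_sub]
  refine isGreatest_edgeSelfDistances_half_of_le hw hwd (by linarith) ?_
  rw [vbar_eq_one_sub_ubar hw.ne']
  linarith

theorem isGreatest_edgeSelfDistances_one_sub_mul (hw : 0 < w) (hwd : 0 ≤ w + duv)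
    (hlam : lam ∈ Icc ((w - duv) / (2 * w)) (1 / 2)) :
    IsGreatest (edgeSelfDistances w duv lam) ((1 - lam) * w) := by
  have hvbar : w - duv ≤ lam * (2 * w) := (div_le_iff₀ (by positivity)).1 hlam.1
  refine ⟨⟨1, ⟨zero_le_one, le_rfl⟩, (edgeSelfDist_one (by linarith [hlam.2]) hwd hvbar).symm⟩, ?_⟩
  rintro y ⟨mu, hmu, rfl⟩
  exact edgeSelfDist_le_one_sub_mul hw.le hlam.2 hmu

theorem isGreatest_edgeSelfDistances_mul (hw : 0 < w) (hwd : 0 ≤ w + duv)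
    (hlam : lam ∈ Icc (1 / 2) ((w + duv) / (2 * w))) :
    IsGreatest (edgeSelfDistances w duv lam) (lam * w) := by
  have hreflect : 1 - lam ∈ Icc ((w - duv) / (2 * w)) (1 / 2) := by
    rw [vbar_eq_one_sub_ubar hw.ne']
    exact ⟨by linarith [hlam.2], by linarith [hlam.1]⟩
  simpa only [edgeSelfDistances_one_sub, sub_sub_cancel] using
    isGreatest_edgeSelfDistances_one_sub_mul hw hwd hreflect

end

theorem edge_to_self_farthest_distance_general (w duv : ℝ) (hw : 0 < w) (h0 : 0 ≤ duv) :
    ((w - duv) / (2 * w) ≤ 1 / 2) ∧ (1 / 2 ≤ (w + duv) / (2 * w)) ∧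
    ((w - duv) / (2 * w) = 1 - (w + duv) / (2 * w)) ∧
    ∀ lam ∈ Icc (0:ℝ) 1,
      (lam ≤ (w - duv) / (2 * w) →
        IsGreatest {y : ℝ | ∃ mu ∈ Icc (0:ℝ) 1, y =
            min (|lam - mu| * w) (min (lam * w + duv + (1 - mu) * w) ((1 - lam) * w + duv + mu * w))}
          ((w + duv) / 2)) ∧
      (lam ∈ Icc ((w - duv) / (2 * w)) (1 / 2) →
        IsGreatest {y : ℝ | ∃ mu ∈ Icc (0:ℝ) 1, y =
            min (|lam - mu| * w) (min (lam * w + duv + (1 - mu) * w) ((1 - lam) * w + duv + mu * w))}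
          ((1 - lam) * w)) ∧
      (lam ∈ Icc (1 / 2) ((w + duv) / (2 * w)) →
        IsGreatest {y : ℝ | ∃ mu ∈ Icc (0:ℝ) 1, y =
            min (|lam - mu| * w) (min (lam * w + duv + (1 - mu) * w) ((1 - lam) * w + duv + mu * w))}
          (lam * w)) ∧
      ((w + duv) / (2 * w) ≤ lam →
        IsGreatest {y : ℝ | ∃ mu ∈ Icc (0:ℝ) 1, y =
            min (|lam - mu| * w) (min (lam * w + duv + (1 - mu) * w) ((1 - lam) * w + duv + mu * w))}
          ((w + duv) / 2)) := by
  have hwd : 0 ≤ w + duv := by linarith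
  refine ⟨?_, ?_, vbar_eq_one_sub_ubar hw.ne', fun lam hlam => ⟨fun h => ?_, fun h => ?_,
    fun h => ?_, fun h => ?_⟩⟩
  · rw [div_le_div_iff₀ (by positivity) two_pos]
    linarith
  · rw [div_le_div_iff₀ two_pos (by positivity)]
    linarith
  · exact isGreatest_edgeSelfDistances_half_of_le hw hwd hlam.1 h
  · exact isGreatest_edgeSelfDistances_one_sub_mul hw hwd h
  · exact isGreatest_edgeSelfDistances_mul hw hwd h
  · exact isGreatest_edgeSelfDistances_half_of_ge hw hwd hlam.2 h

/-- Lemma 4 (edge to itself): on an edge `uv` of weight `w`, with `duv = d(u,v)` the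
shortest-path distance between the endpoints (possibly `< w` via the rest of the network),
the distance from `p lam` to `q mu` on `uv` is
`d3 lam mu = min (|lam-mu|*w) (min (lam*w + duv + (1-mu)*w) ((1-lam)*w + duv + mu*w))`.
The farthest point `ū` on `uv` from `u` sits at `lamubar = (w+duv)/(2w)`, `v̄` at
`lamvbar = (w-duv)/(2w)`; `v̄ ∈ uc`, `ū ∈ cv` for the midpoint `c` (parameter 1/2), and
`w_{uv̄} = w_{v ū}`.  The farthest-distance function equals `(w+duv)/2` on `u v̄` and on
`ū v`, equals `(1-lam)*w` on `v̄ c`, and `lam*w` on `c ū`. -/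
theorem edge_to_self_farthest_distance (w duv : ℝ) (hw : 0 < w) (h0 : 0 ≤ duv)
    (hduv : duv ≤ w) :
    ((w - duv) / (2 * w) ≤ 1 / 2) ∧ (1 / 2 ≤ (w + duv) / (2 * w)) ∧
    ((w - duv) / (2 * w) = 1 - (w + duv) / (2 * w)) ∧
    ∀ lam ∈ Icc (0:ℝ) 1,
      (lam ≤ (w - duv) / (2 * w) →
        IsGreatest {y : ℝ | ∃ mu ∈ Icc (0:ℝ) 1, y =
            min (|lam - mu| * w) (min (lam * w + duv + (1 - mu) * w) ((1 - lam) * w + duv + mu * w))}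
          ((w + duv) / 2)) ∧
      (lam ∈ Icc ((w - duv) / (2 * w)) (1 / 2) →
        IsGreatest {y : ℝ | ∃ mu ∈ Icc (0:ℝ) 1, y =
            min (|lam - mu| * w) (min (lam * w + duv + (1 - mu) * w) ((1 - lam) * w + duv + mu * w))}
          ((1 - lam) * w)) ∧
      (lam ∈ Icc (1 / 2) ((w + duv) / (2 * w)) →
        IsGreatest {y : ℝ | ∃ mu ∈ Icc (0:ℝ) 1, y =
            min (|lam - mu| * w) (min (lam * w + duv + (1 - mu) * w) ((1 - lam) * w + duv + mu * w))}
          (lam * w)) ∧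
      ((w + duv) / (2 * w) ≤ lam →
        IsGreatest {y : ℝ | ∃ mu ∈ Icc (0:ℝ) 1, y =
            min (|lam - mu| * w) (min (lam * w + duv + (1 - mu) * w) ((1 - lam) * w + duv + mu * w))}
          ((w + duv) / 2)) :=
  edge_to_self_farthest_distance_general w duv hw h0
end

section
/- On an edge uv of a network G with m edges, the eccentricity function λ ↦ ecc(p(λ)) = max_{st∈E} φ_{uv}^{st}(λ) is continuous and piecewise linear, and if k is the number of edges of G containing a farthest point of some point of uv, then this upper envelope consists of at most 4k+1 linear segments. -/
open Set

/-- A finite simple undirected network on `n` vertices with positive edge weights. -/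
structure WGraph (n : ℕ) where
  adj : Fin n → Fin n → Bool
  symm : ∀ u v, adj u v = adj v u
  loopless : ∀ u, adj u u = false
  w : Fin n → Fin n → ℝ
  wsymm : ∀ u v, w u v = w v u
  wpos : ∀ u v, adj u v = true → 0 < w u v

variable {n : ℕ}

def WGraph.toSimple (G : WGraph n) : SimpleGraph (Fin n) where
  Adj u v := G.adj u v = true
  symm := ⟨fun u v (h : G.adj u v = true) => by show G.adj v u = true; rw [G.symm]; exact h⟩
  loopless := ⟨fun u (h : G.adj u u = true) => by simp [G.loopless u] at h⟩

instance (G : WGraph n) : DecidableRel G.toSimple.Adj :=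
  fun u v => inferInstanceAs (Decidable (G.adj u v = true))

/-- Total weight of a walk. -/
noncomputable def WGraph.walkWeight (G : WGraph n) {u v : Fin n}
    (p : G.toSimple.Walk u v) : ℝ :=
  (p.darts.map fun d => G.w d.toProd.1 d.toProd.2).sum

/-- Weighted shortest-path distance between vertices. -/
noncomputable def WGraph.vdist (G : WGraph n) (u v : Fin n) : ℝ :=
  sInf {x | ∃ p : G.toSimple.Walk u v, x = G.walkWeight p}

/-- Network distance between the point at parameter `a` on edge `uv` and the point at
parameter `b` on edge `st`: the minimum over routes through the endpoints, together with
the direct route along the edge when the two edges coincide. -/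
noncomputable def WGraph.pdist (G : WGraph n) (u v : Fin n) (a : ℝ) (s t : Fin n) (b : ℝ) : ℝ :=
  let base := min
    (min (a * G.w u v + G.vdist u s + b * G.w s t)
         (a * G.w u v + G.vdist u t + (1 - b) * G.w s t))
    (min ((1 - a) * G.w u v + G.vdist v s + b * G.w s t)
         ((1 - a) * G.w u v + G.vdist v t + (1 - b) * G.w s t))
  if u = s ∧ v = t then min (|a - b| * G.w u v) base
  else if u = t ∧ v = s then min (|a - (1 - b)| * G.w u v) base
  else base

/-- Eccentricity of the point at parameter `a` on edge `uv`: the largest network distance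
to any point of the network. -/
noncomputable def WGraph.eccOn (G : WGraph n) (u v : Fin n) (a : ℝ) : ℝ :=
  sSup {x | ∃ s t, G.adj s t = true ∧ ∃ b ∈ Icc (0:ℝ) 1, x = G.pdist u v a s t b}

/-- A point of the network: an (oriented) edge together with a parameter in `[0,1]`. -/
abbrev NetPt (n : ℕ) := (Fin n × Fin n) × ℝ

def WGraph.validPt (G : WGraph n) (p : NetPt n) : Prop :=
  G.adj p.1.1 p.1.2 = true ∧ p.2 ∈ Icc (0:ℝ) 1

noncomputable def WGraph.pdistPt (G : WGraph n) (p q : NetPt n) : ℝ :=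
  G.pdist p.1.1 p.1.2 p.2 q.1.1 q.1.2 q.2

noncomputable def WGraph.eccPt (G : WGraph n) (p : NetPt n) : ℝ :=
  G.eccOn p.1.1 p.1.2 p.2

/-- `f` is piecewise affine on `[0,1]` with at most `N` pieces. -/
def PWAffine (f : ℝ → ℝ) (N : ℕ) : Prop :=
  ∃ t : Fin (N + 1) → ℝ, Monotone t ∧ t 0 = 0 ∧ t (Fin.last N) = 1 ∧
    ∀ i : Fin N, ∃ a b : ℝ, ∀ x ∈ Icc (t i.castSucc) (t i.succ), f x = a * x + b

/-!
For every edge `st`, the farthest distance `φ^{st}(a)` from `p(a)` to a point of `st` is the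
maximum over `b` of a minimum of two lines in `b` of slopes `±w_st`; computing it shows that
`φ^{st}` is, at every `a`, on an ascending line of slope `w_uv`, on a descending line of slope
`-w_uv`, or equal to one of finitely many constants. The eccentricity is attained, so it agrees at
each `a` with `φ^{st}` for an edge `st` carrying a farthest point: there are `k` such edges, hence
`2k` lines. Since `ecc` is `w_uv`-Lipschitz, the set where it touches a line of slope `±w_uv` is a
closed interval. Together with `0` and `1`, the `4k` endpoints of these intervals cut `[0, 1]` into
at most `4k + 1` pieces; on each piece `ecc` either follows one line or takes finitely many values,
and is then constant by continuity.
-/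

open scoped NNReal

theorem isGreatest_image_Icc_of_eq_min {f : ℝ → ℝ} {l r P Q w : ℝ} (hlr : l ≤ r)
    (hw : 0 < w) (hf : ∀ b ∈ Icc l r, f b = min (P + w * b) (Q - w * b)) :
    IsGreatest (f '' Icc l r) (min ((P + Q) / 2) (min (Q - w * l) (P + w * r))) := by
  have hwlr := mul_le_mul_of_nonneg_left hlr hw.le
  refine ⟨?_, ?_⟩
  · rcases le_or_gt (Q - P) (2 * w * l) with hl | hl
    · refine ⟨l, ⟨le_rfl, hlr⟩, ?_⟩
      rw [hf l ⟨le_rfl, hlr⟩, min_eq_right (show Q - w * l ≤ P + w * l by linarith),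
        min_eq_left (show Q - w * l ≤ P + w * r by linarith), min_eq_right (by linarith)]
    rcases le_or_gt (2 * w * r) (Q - P) with hr | hr
    · refine ⟨r, ⟨hlr, le_rfl⟩, ?_⟩
      rw [hf r ⟨hlr, le_rfl⟩, min_eq_left (show P + w * r ≤ Q - w * r by linarith),
        min_eq_right (show P + w * r ≤ Q - w * l by linarith), min_eq_right (by linarith)]
    · have hb : (Q - P) / (2 * w) ∈ Icc l r := by
        constructor
        · rw [le_div_iff₀ (by positivity)]; linarith
        · rw [div_le_iff₀ (by positivity)]; linarith
      refine ⟨_, hb, ?_⟩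
      have hc : w * ((Q - P) / (2 * w)) = (Q - P) / 2 := by field_simp
      rw [hf _ hb, hc, min_eq_left (le_min (by linarith) (by linarith))]
      ring_nf
      exact min_self _
  · rintro _ ⟨b, hb, rfl⟩
    rw [hf b hb]
    have := mul_le_mul_of_nonneg_left hb.1 hw.le
    have := mul_le_mul_of_nonneg_left hb.2 hw.le
    have := min_le_left (P + w * b) (Q - w * b)
    have := min_le_right (P + w * b) (Q - w * b)
    exact le_min (by linarith) (le_min (by linarith) (by linarith))

/-- Both sides are the minimum of the same eight affine functions of `a`. -/
theorem min_midpoint_min_eq (a w A B C D W : ℝ) :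
    min ((min (a * w + A) ((1 - a) * w + C) + (min (a * w + B) ((1 - a) * w + D) + W)) / 2)
      (min (min (a * w + B) ((1 - a) * w + D) + W) (min (a * w + A) ((1 - a) * w + C) + W)) =
    min (min (w * a + min ((A + B + W) / 2) (min (A + W) (B + W)))
        (-(w * a) + (w + min ((C + D + W) / 2) (min (C + W) (D + W)))))
      (min ((A + D + W + w) / 2) ((C + B + W + w) / 2)) := by
  simp only [← min_add_add_left, ← min_add_add_right,
    ← min_div_div_right (zero_le_two : (0:ℝ) ≤ 2)]
  apply le_antisymm <;> simp only [le_min_iff, min_le_iff] <;> ring_nf <;> simp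

theorem LipschitzOnWith.ordConnected_setOf_eq_line {K : ℝ≥0} {E : ℝ → ℝ} {s : Set ℝ}
    (hE : LipschitzOnWith K E s) (hs : s.OrdConnected) {σ c : ℝ} (hσ : |σ| = K) :
    {x ∈ s | E x = σ * x + c}.OrdConnected := by
  refine ⟨fun y hy z hz x hx => ⟨hs.out hy.1 hz.1 hx, ?_⟩⟩
  have hxs := hs.out hy.1 hz.1 hx
  have hyx := hE.dist_le_mul x hxs y hy.1
  have hzx := hE.dist_le_mul z hz.1 x hxs
  rw [Real.dist_eq, Real.dist_eq, abs_of_nonneg (sub_nonneg.2 hx.1), abs_le] at hyx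
  rw [Real.dist_eq, Real.dist_eq, abs_of_nonneg (sub_nonneg.2 hx.2), abs_le] at hzx
  have := hy.2
  have := hz.2
  rcases (abs_eq K.coe_nonneg).1 hσ with rfl | rfl <;>
  linarith [hyx.1, hyx.2, hzx.1, hzx.2]

theorem Set.OrdConnected.Icc_subset_of_mem_Ioo {s : Set ℝ} (hs : s.OrdConnected)
    (hc : IsClosed s) (hb : BddBelow s) (ha : BddAbove s) {x y z : ℝ} (hz : z ∈ s)
    (hzxy : z ∈ Ioo x y) (hinf : sInf s ∉ Ioo x y) (hsup : sSup s ∉ Ioo x y) :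
    Icc x y ⊆ s := by
  have hx : sInf s ≤ x := not_lt.1 fun h => hinf ⟨h, (csInf_le hb hz).trans_lt hzxy.2⟩
  have hy : y ≤ sSup s := not_lt.1 fun h => hsup ⟨hzxy.1.trans_le (le_csSup ha hz), h⟩
  exact (Icc_subset_Icc hx hy).trans
    (hs.out (hc.csInf_mem ⟨z, hz⟩ hb) (hc.csSup_mem ⟨z, hz⟩ ha))

theorem ContinuousOn.exists_affine_of_mapsTo_Ioo {f : ℝ → ℝ} {x y : ℝ} {F : Set ℝ}
    (hf : ContinuousOn f (Icc x y)) (hF : F.Finite) (hmaps : MapsTo f (Ioo x y) F) :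
    ∃ a b : ℝ, ∀ z ∈ Icc x y, f z = a * z + b := by
  have hfin : (f '' Icc x y).Finite := (hF.union (toFinite {f x, f y})).subset <| by
    rintro _ ⟨z, hz, rfl⟩
    rcases hz.1.eq_or_lt with rfl | hxz
    · simp
    rcases hz.2.eq_or_lt with rfl | hzy
    · simp
    exact Or.inl (hmaps ⟨hxz, hzy⟩)
  refine ⟨0, f x, fun z hz => ?_⟩
  simpa using isPreconnected_Icc.constant_of_mapsTo hfin.isDiscrete hf (mapsTo_image f _) hz
    ⟨le_rfl, hz.1.trans hz.2⟩

/-- `0 ∈ Icc x y` is there for `s = ∅`: `sInf ∅ = 0` in `ℝ`. -/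
theorem Real.sInf_mem_Icc_of_subset {s : Set ℝ} {x y : ℝ} (hs : s ⊆ Icc x y)
    (h0 : (0:ℝ) ∈ Icc x y) : sInf s ∈ Icc x y := by
  rcases s.eq_empty_or_nonempty with rfl | ⟨z, hz⟩
  · rwa [Real.sInf_empty]
  · exact ⟨le_csInf ⟨z, hz⟩ fun w hw => (hs hw).1,
      (csInf_le ⟨x, fun w hw => (hs hw).1⟩ hz).trans (hs hz).2⟩

theorem Real.sSup_mem_Icc_of_subset {s : Set ℝ} {x y : ℝ} (hs : s ⊆ Icc x y)
    (h0 : (0:ℝ) ∈ Icc x y) : sSup s ∈ Icc x y := by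
  rcases s.eq_empty_or_nonempty with rfl | ⟨z, hz⟩
  · rwa [Real.sSup_empty]
  · exact ⟨(hs hz).1.trans (le_csSup ⟨y, fun w hw => (hs hw).2⟩ hz),
      csSup_le ⟨z, hz⟩ fun w hw => (hs hw).2⟩

theorem pwAffine_of_breakpoints {f : ℝ → ℝ} {N : ℕ} (P : Finset ℝ)
    (hcard : P.card ≤ N + 1) (hP : ∀ x ∈ P, x ∈ Icc (0:ℝ) 1) (h0 : (0:ℝ) ∈ P) (h1 : (1:ℝ) ∈ P)
    (hgap : ∀ x ∈ P, ∀ y ∈ P, (∀ z ∈ P, z ∉ Ioo x y) →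
      ∃ a b : ℝ, ∀ z ∈ Icc x y, f z = a * z + b) :
    PWAffine f N := by
  have hc : 0 < P.card := Finset.card_pos.2 ⟨0, h0⟩
  set e := P.orderEmbOfFin rfl
  -- pad the sorted breakpoints by repeating the last one
  let idx : Fin (N + 1) → Fin P.card := fun i => ⟨min i (P.card - 1), by omega⟩
  have he : ∀ j, e j ∈ P := fun j => Finset.orderEmbOfFin_mem P rfl j
  refine ⟨fun i => e (idx i),
    e.monotone.comp fun i j hij => Fin.mk_le_mk.2 (min_le_min_right _ hij), ?_, ?_, ?_⟩
  · have : idx 0 = ⟨0, hc⟩ := by simp [idx]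
    simp only [this]
    exact (Finset.orderEmbOfFin_zero rfl hc).trans <|
      le_antisymm (P.min'_le 0 h0) (hP _ (P.min'_mem _)).1
  · have : idx (Fin.last N) = ⟨P.card - 1, by omega⟩ := by simp [idx]; omega
    simp only [this]
    exact (Finset.orderEmbOfFin_last rfl hc).trans <|
      le_antisymm (hP _ (P.max'_mem _)).2 (P.le_max' 1 h1)
  · intro i
    refine hgap _ (he _) _ (he _) fun z hz ⟨hlt, hgt⟩ => ?_
    obtain ⟨j, rfl⟩ : z ∈ Set.range e := by rw [Finset.range_orderEmbOfFin]; exact hz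
    rw [e.lt_iff_lt, Fin.lt_def] at hlt hgt
    simp only [idx, Fin.val_castSucc, Fin.val_succ] at hlt hgt
    omega

theorem pwAffine_of_forall_eq_line_or_mem {K : ℝ≥0} {E : ℝ → ℝ}
    (hE : LipschitzOnWith K E (Icc 0 1)) {L : Finset (ℝ × ℝ)} (hL : ∀ l ∈ L, |l.1| = K)
    {F : Set ℝ} (hF : F.Finite) {m : ℕ} (hm : L.card ≤ m)
    (hEL : ∀ x ∈ Icc (0:ℝ) 1, (∃ l ∈ L, E x = l.1 * x + l.2) ∨ E x ∈ F) :
    PWAffine E (2 * m + 1) := by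
  classical
  let contact : ℝ × ℝ → Set ℝ := fun l => {x ∈ Icc 0 1 | E x = l.1 * x + l.2}
  have hcontact : ∀ l, contact l ⊆ Icc 0 1 := fun l x hx => hx.1
  let P : Finset ℝ := {0, 1} ∪ L.image (fun l => sInf (contact l)) ∪
    L.image (fun l => sSup (contact l))
  have hP : ∀ x ∈ P, x ∈ Icc (0:ℝ) 1 := by
    simp only [P, Finset.mem_union, Finset.mem_insert, Finset.mem_singleton, Finset.mem_image]
    rintro x (((rfl | rfl) | ⟨l, -, rfl⟩) | ⟨l, -, rfl⟩)
    · simp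
    · simp
    · exact Real.sInf_mem_Icc_of_subset (hcontact l) (by simp)
    · exact Real.sSup_mem_Icc_of_subset (hcontact l) (by simp)
  refine pwAffine_of_breakpoints P ?_ hP (by simp [P]) (by simp [P]) fun x hx y hy hgap => ?_
  · calc P.card ≤ 2 + m + m := by
          refine (Finset.card_union_le _ _).trans (add_le_add ((Finset.card_union_le _ _).trans
            (add_le_add Finset.card_le_two ?_)) ?_) <;> exact Finset.card_image_le.trans hm
      _ = 2 * m + 1 + 1 := by ring
  by_cases hline : ∃ l ∈ L, ∃ z ∈ contact l, z ∈ Ioo x y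
  · obtain ⟨l, hl, z, hz, hzxy⟩ := hline
    have hsub : Icc x y ⊆ contact l :=
      (hE.ordConnected_setOf_eq_line ordConnected_Icc (hL l hl)).Icc_subset_of_mem_Ioo
        (isClosed_Icc.isClosed_eq hE.continuousOn (by fun_prop))
        ⟨0, fun w hw => (hcontact l hw).1⟩ ⟨1, fun w hw => (hcontact l hw).2⟩ hz hzxy
        (hgap _ (Finset.mem_union_left _ (Finset.mem_union_right _ (Finset.mem_image_of_mem _ hl))))
        (hgap _ (Finset.mem_union_right _ (Finset.mem_image_of_mem _ hl)))
    exact ⟨l.1, l.2, fun z hz => (hsub hz).2⟩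
  · push Not at hline
    have hIcc : Icc x y ⊆ Icc 0 1 := Icc_subset_Icc (hP x hx).1 (hP y hy).2
    refine (hE.continuousOn.mono hIcc).exists_affine_of_mapsTo_Ioo hF fun z hz => ?_
    have hz01 := hIcc (Ioo_subset_Icc_self hz)
    rcases hEL z hz01 with ⟨l, hl, hzl⟩ | hzF
    · exact absurd hz (hline l hl z ⟨hz01, hzl⟩)
    · exact hzF

namespace WGraph

variable (G : WGraph n) {u v s t : Fin n}

theorem walkWeight_nonneg {x y : Fin n} (p : G.toSimple.Walk x y) : 0 ≤ G.walkWeight p :=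
  List.sum_nonneg fun _ hx => by
    obtain ⟨d, -, rfl⟩ := List.mem_map.1 hx
    exact (G.wpos _ _ d.adj).le

theorem vdist_nonneg (x y : Fin n) : 0 ≤ G.vdist x y :=
  Real.sInf_nonneg fun _ ⟨p, hp⟩ => hp ▸ G.walkWeight_nonneg p

theorem vdist_self (x : Fin n) : G.vdist x x = 0 :=
  le_antisymm
    (csInf_le ⟨0, fun _ ⟨p, hp⟩ => hp ▸ G.walkWeight_nonneg p⟩
      ⟨.nil, by simp [walkWeight]⟩)
    (G.vdist_nonneg x x)

theorem continuous_pdist (a : ℝ) : Continuous (G.pdist u v a s t ·) := by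
  unfold pdist
  split_ifs <;> fun_prop

theorem pdist_le_pdist_add (hw : 0 ≤ G.w u v) (a a' b : ℝ) :
    G.pdist u v a s t b ≤ G.pdist u v a' s t b + G.w u v * |a - a'| := by
  have hasc : ∀ c c', a * G.w u v + c + c' ≤ a' * G.w u v + c + c' + G.w u v * |a - a'| := by
    intro c c'; nlinarith [mul_le_mul_of_nonneg_left (le_abs_self (a - a')) hw]
  have hdesc : ∀ c c',
      (1 - a) * G.w u v + c + c' ≤ (1 - a') * G.w u v + c + c' + G.w u v * |a - a'| := by
    intro c c'; nlinarith [mul_le_mul_of_nonneg_left (neg_abs_le (a - a')) hw]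
  have hdirect : ∀ c, |a - c| * G.w u v ≤ |a' - c| * G.w u v + G.w u v * |a - a'| := by
    intro c; nlinarith [mul_le_mul_of_nonneg_left (abs_sub_le a a' c) hw]
  unfold pdist
  split_ifs <;> simp only [min_add] <;> apply_rules [min_le_min]

theorem pdist_swap (huv : u ≠ v) (a b : ℝ) :
    G.pdist u v a t s b = G.pdist u v a s t (1 - b) := by
  have hts : ¬(u = t ∧ v = s) ∨ ¬(u = s ∧ v = t) := by
    by_contra! h
    exact huv (h.1.1.trans h.2.2.symm)
  unfold pdist
  simp only [sub_sub_cancel, G.wsymm t s, min_comm (_ + G.vdist _ t + _) (_ + G.vdist _ s + _)]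
  rcases hts with h | h <;> simp only [h, if_false]

theorem pdist_eq_of_ne (h : s(s, t) ≠ s(u, v)) (a b : ℝ) :
    G.pdist u v a s t b =
      min (min (a * G.w u v + G.vdist u s) ((1 - a) * G.w u v + G.vdist v s) + G.w s t * b)
        (min (a * G.w u v + G.vdist u t) ((1 - a) * G.w u v + G.vdist v t) + G.w s t
          - G.w s t * b) := by
  have h₁ : ¬(u = s ∧ v = t) := by rintro ⟨rfl, rfl⟩; exact h rfl
  have h₂ : ¬(u = t ∧ v = s) := by rintro ⟨rfl, rfl⟩; exact h Sym2.eq_swap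
  unfold pdist
  simp only [h₁, h₂, if_false]
  rw [min_min_min_comm, min_add, add_sub_assoc, min_add]
  congr 2 <;> ring

theorem pdist_self_of_le (hw : 0 ≤ G.w u v) {a b : ℝ} (ha : a ≤ 1) (hb : b ∈ Icc 0 a) :
    G.pdist u v a u v b =
      min ((1 - a) * G.w u v + G.vdist v u + G.w u v * b) (a * G.w u v - G.w u v * b) := by
  have := G.vdist_nonneg u v
  have := mul_le_mul_of_nonneg_left hb.1 hw
  have := mul_le_mul_of_nonneg_left hb.2 hw
  have := mul_le_mul_of_nonneg_left ha hw
  unfold pdist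
  simp only [and_self, if_true, vdist_self, abs_of_nonneg (sub_nonneg.2 hb.2)]
  apply le_antisymm
  · exact le_min (min_le_of_right_le <| min_le_of_right_le <| min_le_of_left_le <| by linarith)
      (min_le_of_left_le <| by linarith)
  · refine le_min ?_ (le_min (le_min ?_ ?_) (le_min ?_ ?_)) <;>
    first
    | exact min_le_of_left_le (by linarith)
    | exact min_le_of_right_le (by linarith)

theorem pdist_self_of_ge (hw : 0 ≤ G.w u v) {a b : ℝ} (ha : 0 ≤ a) (hb : b ∈ Icc a 1) :
    G.pdist u v a u v b =
      min (-(a * G.w u v) + G.w u v * b) (a * G.w u v + G.vdist u v + G.w u v - G.w u v * b) := by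
  have := G.vdist_nonneg v u
  have := mul_le_mul_of_nonneg_left hb.1 hw
  have := mul_le_mul_of_nonneg_left hb.2 hw
  have := mul_le_mul_of_nonneg_left ha hw
  unfold pdist
  simp only [and_self, if_true, vdist_self, abs_of_nonpos (sub_nonpos.2 hb.1)]
  apply le_antisymm
  · exact le_min (min_le_of_left_le <| by linarith)
      (min_le_of_right_le <| min_le_of_left_le <| min_le_of_right_le <| by linarith)
  · refine le_min ?_ (le_min (le_min ?_ ?_) (le_min ?_ ?_)) <;>
    first
    | exact min_le_of_left_le (by linarith)
    | exact min_le_of_right_le (by linarith)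

theorem isCompact_setOf_pdist (a : ℝ) :
    IsCompact {x | ∃ s t, G.adj s t = true ∧
      ∃ b ∈ Icc (0:ℝ) 1, x = G.pdist u v a s t b} := by
  have : {x | ∃ s t, G.adj s t = true ∧ ∃ b ∈ Icc (0:ℝ) 1, x = G.pdist u v a s t b} =
      ⋃ st ∈ {st : Fin n × Fin n | G.adj st.1 st.2 = true},
        (G.pdist u v a st.1 st.2 ·) '' Icc 0 1 := by
    ext x
    simp only [mem_ofPred_eq, mem_iUnion, mem_image, Prod.exists, exists_prop, eq_comm (a := x)]
  rw [this]
  exact (toFinite _).isCompact_biUnion fun st _ => isCompact_Icc.image (G.continuous_pdist a)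

theorem pdist_le_eccOn (hst : G.adj s t = true) {b : ℝ} (hb : b ∈ Icc (0:ℝ) 1) (a : ℝ) :
    G.pdist u v a s t b ≤ G.eccOn u v a :=
  le_csSup (G.isCompact_setOf_pdist a).bddAbove ⟨s, t, hst, b, hb, rfl⟩

theorem exists_pdist_eq_eccOn (huv : G.adj u v = true) (a : ℝ) :
    ∃ s t, G.adj s t = true ∧ ∃ b ∈ Icc (0:ℝ) 1, G.pdist u v a s t b = G.eccOn u v a := by
  obtain ⟨s, t, hst, b, hb, h⟩ :=
    (G.isCompact_setOf_pdist a).sSup_mem ⟨_, u, v, huv, 0, ⟨le_rfl, zero_le_one⟩, rfl⟩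
  exact ⟨s, t, hst, b, hb, h.symm⟩

theorem lipschitzWith_eccOn (huv : G.adj u v = true) :
    LipschitzWith ⟨G.w u v, (G.wpos u v huv).le⟩ (G.eccOn u v) := by
  refine LipschitzWith.of_le_add_mul _ fun a a' => ?_
  obtain ⟨s, t, hst, b, hb, h⟩ := G.exists_pdist_eq_eccOn huv a
  rw [← h, Real.dist_eq]
  exact (G.pdist_le_pdist_add (G.wpos u v huv).le a a' b).trans
    (add_le_add (G.pdist_le_eccOn hst hb a') le_rfl)

/-- The paper's `φ_{uv}^{st}(a)`. -/
noncomputable def edgeEcc (G : WGraph n) (u v : Fin n) (a : ℝ) (s t : Fin n) : ℝ :=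
  sSup ((G.pdist u v a s t ·) '' Icc 0 1)

theorem edgeEcc_eq_eccOn (hst : G.adj s t = true) {a b : ℝ} (hb : b ∈ Icc (0:ℝ) 1)
    (h : G.pdist u v a s t b = G.eccOn u v a) : G.edgeEcc u v a s t = G.eccOn u v a :=
  IsGreatest.csSup_eq
    ⟨⟨b, hb, h⟩, by rintro _ ⟨b', hb', rfl⟩; exact G.pdist_le_eccOn hst hb' a⟩

theorem edgeEcc_swap (huv : u ≠ v) (a : ℝ) : G.edgeEcc u v a t s = G.edgeEcc u v a s t := by
  have : (G.pdist u v a t s ·) = (G.pdist u v a s t ·) ∘ (1 - ·) := funext (G.pdist_swap huv a)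
  rw [edgeEcc, this, image_comp, image_const_sub_Icc, sub_zero, sub_self, edgeEcc]

theorem edgeEcc_eq_of_ne (hst : G.adj s t = true) (h : s(s, t) ≠ s(u, v)) (a : ℝ) :
    G.edgeEcc u v a s t =
      min ((min (a * G.w u v + G.vdist u s) ((1 - a) * G.w u v + G.vdist v s)
          + (min (a * G.w u v + G.vdist u t) ((1 - a) * G.w u v + G.vdist v t) + G.w s t)) / 2)
        (min (min (a * G.w u v + G.vdist u t) ((1 - a) * G.w u v + G.vdist v t) + G.w s t)
          (min (a * G.w u v + G.vdist u s) ((1 - a) * G.w u v + G.vdist v s) + G.w s t)) := by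
  have := isGreatest_image_Icc_of_eq_min zero_le_one (G.wpos s t hst)
    fun b _ => G.pdist_eq_of_ne h a b
  rw [edgeEcc, this.csSup_eq, mul_zero, sub_zero, mul_one]

theorem edgeEcc_self (hw : 0 < G.w u v) {a : ℝ} (ha : a ∈ Icc 0 1) :
    G.edgeEcc u v a u v =
      max (min ((G.w u v + G.vdist v u) / 2) (min (G.w u v * a) (G.w u v + G.vdist v u)))
        (min ((G.w u v + G.vdist u v) / 2)
          (min (G.w u v + G.vdist u v) (-(G.w u v * a) + G.w u v))) := by
  have h₁ := isGreatest_image_Icc_of_eq_min ha.1 hw fun b hb => G.pdist_self_of_le hw.le ha.2 hb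
  have h₂ := isGreatest_image_Icc_of_eq_min ha.2 hw fun b hb => G.pdist_self_of_ge hw.le ha.1 hb
  rw [edgeEcc, ← Icc_union_Icc_eq_Icc ha.1 ha.2, image_union, (h₁.union h₂).csSup_eq]
  congr 2 <;> ring_nf

theorem exists_edgeEcc_cases_of_ne (hst : G.adj s t = true) (h : s(s, t) ≠ s(u, v)) :
    ∃ p q : ℝ, ∃ C : Finset ℝ, ∀ a : ℝ,
      G.edgeEcc u v a s t ∈ insert (G.w u v * a + p) (insert (-(G.w u v * a) + q) C) := by
  refine ⟨min ((G.vdist u s + G.vdist u t + G.w s t) / 2)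
      (min (G.vdist u s + G.w s t) (G.vdist u t + G.w s t)),
    G.w u v + min ((G.vdist v s + G.vdist v t + G.w s t) / 2)
      (min (G.vdist v s + G.w s t) (G.vdist v t + G.w s t)),
    {(G.vdist u s + G.vdist v t + G.w s t + G.w u v) / 2,
      (G.vdist v s + G.vdist u t + G.w s t + G.w u v) / 2}, fun a => ?_⟩
  rw [G.edgeEcc_eq_of_ne hst h, min_midpoint_min_eq]
  refine min_rec' (· ∈ _) (min_rec' (· ∈ _) ?_ ?_) (min_rec' (· ∈ _) ?_ ?_) <;> simp

theorem exists_edgeEcc_self_cases (hw : 0 < G.w u v) :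
    ∃ p q : ℝ, ∃ C : Finset ℝ, ∀ a ∈ Icc (0:ℝ) 1,
      G.edgeEcc u v a u v ∈ insert (G.w u v * a + p) (insert (-(G.w u v * a) + q) C) := by
  refine ⟨0, G.w u v, {(G.w u v + G.vdist v u) / 2, G.w u v + G.vdist v u,
    (G.w u v + G.vdist u v) / 2, G.w u v + G.vdist u v}, fun a ha => ?_⟩
  rw [G.edgeEcc_self hw ha]
  refine max_rec' (· ∈ _) (min_rec' (· ∈ _) ?_ (min_rec' (· ∈ _) ?_ ?_))
    (min_rec' (· ∈ _) ?_ (min_rec' (· ∈ _) ?_ ?_)) <;> simp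

theorem exists_edgeEcc_cases (huv : G.adj u v = true) (e : Sym2 (Fin n))
    (he : e ∈ G.toSimple.edgeSet) :
    ∃ p q : ℝ, ∃ C : Finset ℝ, ∀ s t, s(s, t) = e → ∀ a ∈ Icc (0:ℝ) 1,
      G.edgeEcc u v a s t ∈ insert (G.w u v * a + p) (insert (-(G.w u v * a) + q) C) := by
  have hne : u ≠ v := G.toSimple.ne_of_adj huv
  induction e using Sym2.ind with
  | h x y =>
    obtain ⟨p, q, C, hpq⟩ : ∃ p q : ℝ, ∃ C : Finset ℝ, ∀ a ∈ Icc (0:ℝ) 1,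
        G.edgeEcc u v a x y ∈ insert (G.w u v * a + p) (insert (-(G.w u v * a) + q) C) := by
      by_cases hxy : s(x, y) = s(u, v)
      · rcases Sym2.eq_iff.1 hxy with ⟨rfl, rfl⟩ | ⟨rfl, rfl⟩
        · exact G.exists_edgeEcc_self_cases (G.wpos _ _ huv)
        · simpa only [G.edgeEcc_swap hne] using G.exists_edgeEcc_self_cases (G.wpos _ _ huv)
      · obtain ⟨p, q, C, hpq⟩ := G.exists_edgeEcc_cases_of_ne he hxy
        exact ⟨p, q, C, fun a _ => hpq a⟩
    refine ⟨p, q, C, fun s t hst a ha => ?_⟩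
    rcases Sym2.eq_iff.1 hst with ⟨rfl, rfl⟩ | ⟨rfl, rfl⟩
    · exact hpq a ha
    · exact G.edgeEcc_swap hne a ▸ hpq a ha

theorem exists_lines_eccOn_eq_or_mem (huv : G.adj u v = true) (S : Finset (Sym2 (Fin n)))
    (hS : ∀ s t, G.adj s t = true → ∀ a ∈ Icc (0:ℝ) 1, ∀ b ∈ Icc (0:ℝ) 1,
      G.pdist u v a s t b = G.eccOn u v a → s(s, t) ∈ S) :
    ∃ L : Finset (ℝ × ℝ), (∀ l ∈ L, |l.1| = G.w u v) ∧ L.card ≤ 2 * S.card ∧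
      ∃ F : Set ℝ, F.Finite ∧ ∀ a ∈ Icc (0:ℝ) 1,
        (∃ l ∈ L, G.eccOn u v a = l.1 * a + l.2) ∨ G.eccOn u v a ∈ F := by
  classical
  choose! p q C hpq using G.exists_edgeEcc_cases huv
  refine ⟨S.image (fun e => (G.w u v, p e)) ∪ S.image (fun e => (-G.w u v, q e)), ?_,
    (Finset.card_union_le _ _).trans
      ((add_le_add Finset.card_image_le Finset.card_image_le).trans_eq (two_mul _).symm),
    ⋃ e, C e, finite_iUnion fun e => (C e).finite_toSet, fun a ha => ?_⟩
  · simp only [Finset.mem_union, Finset.mem_image]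
    rintro _ (⟨e, -, rfl⟩ | ⟨e, -, rfl⟩)
    · exact abs_of_pos (G.wpos u v huv)
    · rw [abs_neg, abs_of_pos (G.wpos u v huv)]
  obtain ⟨s, t, hst, b, hb, h⟩ := G.exists_pdist_eq_eccOn huv a
  have hSe := hS s t hst a ha b hb h
  rw [← G.edgeEcc_eq_eccOn hst hb h]
  rcases Finset.mem_insert.1 (hpq _ hst s t rfl a ha) with h' | h'
  · exact Or.inl ⟨_, Finset.mem_union_left _ (Finset.mem_image_of_mem _ hSe), h'⟩
  rcases Finset.mem_insert.1 h' with h' | h'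
  · refine Or.inl ⟨_, Finset.mem_union_right _ (Finset.mem_image_of_mem _ hSe), ?_⟩
    rw [h']
    ring
  · exact Or.inr (mem_iUnion.2 ⟨_, h'⟩)

end WGraph

theorem eccentricity_on_edge_piecewise_linear_general (n : ℕ) (G : WGraph n)
    (u v : Fin n) (huv : G.adj u v = true) (k : ℕ)
    (hk : {e : Sym2 (Fin n) | ∃ s t : Fin n, e = s(s, t) ∧ G.adj s t = true ∧
        ∃ lam ∈ Icc (0:ℝ) 1, ∃ mu ∈ Icc (0:ℝ) 1,
          G.pdist u v lam s t mu = G.eccOn u v lam}.ncard = k) :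
    ContinuousOn (fun a => G.eccOn u v a) (Icc 0 1) ∧
    PWAffine (fun a => G.eccOn u v a) (4 * k + 1) := by
  have hLip := G.lipschitzWith_eccOn huv
  obtain ⟨S, hSk, hS⟩ : ∃ S : Finset (Sym2 (Fin n)), S.card = k ∧
      ∀ s t, G.adj s t = true → ∀ a ∈ Icc (0:ℝ) 1, ∀ b ∈ Icc (0:ℝ) 1,
        G.pdist u v a s t b = G.eccOn u v a → s(s, t) ∈ S :=
    ⟨_, (ncard_eq_toFinset_card _ (toFinite _)).symm.trans hk,
      fun s t hst a ha b hb h => (Finite.mem_toFinset _).2 ⟨s, t, rfl, hst, a, ha, b, hb, h⟩⟩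
  obtain ⟨L, hL, hLS, F, hF, hEL⟩ := G.exists_lines_eccOn_eq_or_mem huv S hS
  rw [show 4 * k + 1 = 2 * (2 * k) + 1 by ring]
  exact ⟨hLip.continuous.continuousOn,
    pwAffine_of_forall_eq_line_or_mem hLip.lipschitzOnWith hL hF (hSk ▸ hLS) hEL⟩

/-- Lemma 5: on an edge `uv`, the eccentricity function is continuous and piecewise
linear; if `k` is the number of edges of `G` containing a farthest point of some point
of `uv`, then it consists of at most `4k+1` linear segments. -/
theorem eccentricity_on_edge_piecewise_linear (n : ℕ) (G : WGraph n)
    (hconn : G.toSimple.Connected) (u v : Fin n) (huv : G.adj u v = true) (k : ℕ)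
    (hk : {e : Sym2 (Fin n) | ∃ s t : Fin n, e = s(s, t) ∧ G.adj s t = true ∧
        ∃ lam ∈ Icc (0:ℝ) 1, ∃ mu ∈ Icc (0:ℝ) 1,
          G.pdist u v lam s t mu = G.eccOn u v lam}.ncard = k) :
    ContinuousOn (fun a => G.eccOn u v a) (Icc 0 1) ∧
    PWAffine (fun a => G.eccOn u v a) (4 * k + 1) :=
  eccentricity_on_edge_piecewise_linear_general n G u v huv k hk
end

section
/- The upper envelope of n piecewise-linear functions on [0,1], each consisting of at most one ascending segment of slope +s, at most one constant segment, and at most one descending segment of slope −s (for a common fixed s>0, in this order), has at most 4k+2 breakpoints, where k is the number of functions attaining the envelope at some point. -/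
/-!
Between two consecutive crossing points of the lines making up the trapezoids, every
trapezoid, and hence the envelope `F`, follows a single line of slope `s`, `0` or `-s`, so `F`
is piecewise affine with finitely many breakpoints. Each piece of `F` between consecutive
breakpoints lies on a line of a trapezoid attaining the envelope. Two ascending pieces cannot
come from the same trapezoid: the trapezoid stays on its ascending line to the left of the later
piece, while `F`, being `s`-Lipschitz, stays below that line to the right of the earlier piece, so
`F` would follow the line throughout, and the end of the earlier piece would not be a breakpoint.
Descending pieces are symmetric. Hence there are at most `2k` sloped pieces, and, as two flat
pieces are never adjacent, at most `2k + 1` flat ones.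
-/

open Set

/-- A "trapezoid" function with slope parameter `s`: at most one ascending segment of
slope `+s`, then at most one constant segment, then at most one descending segment of
slope `-s` (equivalently, the minimum of three such lines). -/
def IsTrap (s : ℝ) (f : ℝ → ℝ) : Prop :=
  ∃ c₁ c₂ c₃ : ℝ, ∀ x : ℝ, f x = min (s * x + c₁) (min c₂ (c₃ - s * x))

def AffineOn (G : ℝ → ℝ) (S : Set ℝ) : Prop :=
  ∃ a b : ℝ, ∀ x ∈ S, G x = a * x + b

def AffineNear (G : ℝ → ℝ) (x : ℝ) : Prop :=
  ∃ u v : ℝ, u < x ∧ x < v ∧ AffineOn G (Icc u v)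

lemma affine_coeffs_eq {a b p q x y : ℝ} (hxy : x ≠ y)
    (hx : a * x + b = p * x + q) (hy : a * y + b = p * y + q) : a = p ∧ b = q := by
  have ha : a = p := by
    have h : (a - p) * (x - y) = 0 := by linear_combination hx - hy
    exact sub_eq_zero.1 ((mul_eq_zero.1 h).resolve_right (sub_ne_zero.2 hxy))
  exact ⟨ha, by subst ha; linarith⟩

namespace AffineOn

variable {G : ℝ → ℝ} {S T : Set ℝ}

lemma mono (h : AffineOn G T) (hST : S ⊆ T) : AffineOn G S :=
  let ⟨a, b, hab⟩ := h
  ⟨a, b, fun x hx => hab x (hST hx)⟩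

lemma union {x y : ℝ} (hS : AffineOn G S) (hT : AffineOn G T) (hx : x ∈ S ∩ T)
    (hy : y ∈ S ∩ T) (hxy : x ≠ y) : AffineOn G (S ∪ T) := by
  obtain ⟨a, b, hab⟩ := hS
  obtain ⟨p, q, hpq⟩ := hT
  obtain ⟨rfl, rfl⟩ := affine_coeffs_eq hxy ((hab x hx.1).symm.trans (hpq x hx.2))
    ((hab y hy.1).symm.trans (hpq y hy.2))
  exact ⟨a, b, fun z hz => hz.elim (hab z) (hpq z)⟩

lemma Icc_of_affineNear {u z v : ℝ} (hl : AffineOn G (Icc u z)) (hr : AffineOn G (Icc z v))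
    (hz : AffineNear G z) (huz : u < z) (hzv : z < v) : AffineOn G (Icc u v) := by
  obtain ⟨α, β, hα, hβ, hαβ⟩ := hz
  have hlo : max u α < z := max_lt huz hα
  have hhi : z < min β v := lt_min hβ hzv
  have hlm : AffineOn G (Icc u z ∪ Icc α β) :=
    hl.union hαβ (x := max u α)
      ⟨⟨le_max_left _ _, hlo.le⟩, le_max_right _ _, hlo.le.trans hβ.le⟩
      ⟨⟨huz.le, le_rfl⟩, hα.le, hβ.le⟩ hlo.ne
  refine (hlm.union hr (x := z) (y := min β v) ⟨Or.inl ⟨huz.le, le_rfl⟩, le_rfl, hzv.le⟩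
    ⟨Or.inr ⟨hα.le.trans hhi.le, min_le_left _ _⟩, hhi.le, min_le_right _ _⟩ hhi.ne).mono
    fun y hy => ?_
  rcases le_total y z with h | h
  · exact Or.inl (Or.inl ⟨hy.1, h⟩)
  · exact Or.inr ⟨h, hy.2⟩

end AffineOn

lemma affineNear_of_eqOn_Icc {G : ℝ → ℝ} {x z w a b b' : ℝ} (hxz : x < z) (hzw : z < w)
    (hl : ∀ y ∈ Icc x z, G y = a * y + b) (hr : ∀ y ∈ Icc z w, G y = a * y + b') :
    AffineNear G z := by
  have hb : b' = b := by
    have := (hl z ⟨hxz.le, le_rfl⟩).symm.trans (hr z ⟨le_rfl, hzw.le⟩)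
    linarith
  refine ⟨x, w, hxz, hzw, a, b, fun y hy => ?_⟩
  rcases le_total y z with h | h
  · exact hl y ⟨hy.1, h⟩
  · rw [hr y ⟨h, hy.2⟩, hb]

/-- Induction on `X`: removing a point `z` of `X` merges the two gaps around it, and the merged
gap is still affine because `G` is affine near `z`. -/
lemma affineOn_Icc_of_gaps {G : ℝ → ℝ} {p q : ℝ} (hpq : p < q) (X : Finset ℝ)
    (hgap : ∀ u v, p ≤ u → u < v → v ≤ q → (∀ z ∈ X, z ∉ Ioo u v) →
      AffineOn G (Icc u v))
    (hnear : ∀ z ∈ X, z ∈ Ioo p q → AffineNear G z) : AffineOn G (Icc p q) := by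
  classical
  induction X using Finset.induction_on with
  | empty => exact hgap p q le_rfl hpq le_rfl (by simp)
  | insert z X _ ih =>
    refine ih (fun u v hu huv hv hX => ?_) fun z' hz' => hnear z' (Finset.mem_insert_of_mem hz')
    by_cases hz : z ∈ Ioo u v
    · have hgap' : ∀ u' v', u ≤ u' → v' ≤ v → u' < v' → z ∉ Ioo u' v' →
          AffineOn G (Icc u' v') := fun u' v' hu' hv' huv' hz' =>
        hgap u' v' (hu.trans hu') huv' (hv'.trans hv) fun y hy => by
          rcases Finset.mem_insert.1 hy with rfl | hy
          · exact hz'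
          · exact fun h => hX y hy ⟨hu'.trans_lt h.1, h.2.trans_le hv'⟩
      exact (hgap' u z le_rfl hz.2.le hz.1 fun h => h.2.false).Icc_of_affineNear
        (hgap' z v hz.1.le le_rfl hz.2 fun h => h.1.false)
        (hnear z (Finset.mem_insert_self _ _) ⟨hu.trans_lt hz.1, hz.2.trans_le hv⟩) hz.1 hz.2
    · exact hgap u v hu huv hv fun y hy => by
        rcases Finset.mem_insert.1 hy with rfl | hy
        · exact hz
        · exact hX y hy

lemma Finset.exists_next_mem (X : Finset ℝ) {x y : ℝ} (hy : y ∈ X) (hxy : x < y) :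
    ∃ w ∈ X, x < w ∧ w ≤ y ∧ ∀ z ∈ X, z ∉ Set.Ioo x w := by
  classical
  have hy' : y ∈ X.filter (x < ·) := Finset.mem_filter.2 ⟨hy, hxy⟩
  obtain ⟨hwX, hxw⟩ := Finset.mem_filter.1 ((X.filter (x < ·)).min'_mem ⟨y, hy'⟩)
  refine ⟨_, hwX, hxw, Finset.min'_le _ _ hy', fun z hz hzI => ?_⟩
  exact (Finset.min'_le _ _ (Finset.mem_filter.2 ⟨hz, hzI.1⟩)).not_gt hzI.2

/-- The abscissa where the lines with (slope, intercept) `p` and `q` cross; a junk value when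
they are parallel. -/
noncomputable def crossing (p q : ℝ × ℝ) : ℝ := (q.2 - p.2) / (p.1 - q.1)

lemma line_le_line_on_Icc {p q : ℝ × ℝ} {u v y₀ : ℝ} (hy₀ : y₀ ∈ Ioo u v)
    (hpq : crossing p q ∉ Ioo u v) (h : p.1 * y₀ + p.2 ≤ q.1 * y₀ + q.2) :
    ∀ y ∈ Icc u v, p.1 * y + p.2 ≤ q.1 * y + q.2 := by
  intro y hy
  rcases eq_or_ne p.1 q.1 with hslope | hslope
  · rw [hslope] at h ⊢
    linarith
  have hz : (p.1 - q.1) * crossing p q = q.2 - p.2 :=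
    mul_div_cancel₀ _ (sub_ne_zero.2 hslope)
  have hdiff : ∀ x, p.1 * x + p.2 - (q.1 * x + q.2) = (p.1 - q.1) * (x - crossing p q) :=
    fun x => by linear_combination hz
  have h₀ := hdiff y₀
  have h₁ := hdiff y
  simp only [mem_Ioo, not_and_or, not_lt] at hpq
  rcases hpq with hz' | hz' <;> nlinarith [hy₀.1, hy₀.2, hy.1, hy.2]

section Extremal

variable {κ β : Type*} [PartialOrder β] {g : κ → ℝ → β} {G : ℝ → β} {S : Set ℝ}
  {y₀ : ℝ}

lemma exists_eqOn_of_isGreatest (hy₀ : y₀ ∈ S)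
    (hG : ∀ y ∈ S, IsGreatest (range fun j => g j y) (G y))
    (hord : ∀ i j, g i y₀ ≤ g j y₀ → ∀ y ∈ S, g i y ≤ g j y) :
    ∃ i, ∀ y ∈ S, G y = g i y := by
  obtain ⟨i, hi : g i y₀ = G y₀⟩ := (hG y₀ hy₀).1
  refine ⟨i, fun y hy => le_antisymm ?_ ((hG y hy).2 ⟨i, rfl⟩)⟩
  obtain ⟨j, hj : g j y = G y⟩ := (hG y hy).1
  exact hj ▸ hord j i (hi ▸ (hG y₀ hy₀).2 ⟨j, rfl⟩) y hy

lemma exists_eqOn_of_isLeast (hy₀ : y₀ ∈ S)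
    (hG : ∀ y ∈ S, IsLeast (range fun j => g j y) (G y))
    (hord : ∀ i j, g i y₀ ≤ g j y₀ → ∀ y ∈ S, g i y ≤ g j y) :
    ∃ i, ∀ y ∈ S, G y = g i y :=
  exists_eqOn_of_isGreatest (β := βᵒᵈ) hy₀ (fun y hy => (hG y hy).dual)
    fun i j hij y hy => hord j i hij y hy

end Extremal

section Combinatorics

open Finset

/-- `j ↦ j - 1` injects the pieces with `P`, other than the first one, into those without. -/
lemma card_filter_le_card_filter_not_add_one {n : ℕ} (P : Fin n → Prop) [DecidablePred P]
    (h : ∀ j j' : Fin n, j.val + 1 = j'.val → P j → ¬ P j') :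
    #{j | P j} ≤ #{j | ¬ P j} + 1 := by
  have hfirst : #{j | P j ∧ j.val = 0} ≤ 1 :=
    card_le_one.2 fun a ha b hb =>
      Fin.ext ((mem_filter.1 ha).2.2.trans (mem_filter.1 hb).2.2.symm)
  have hrest : #{j | P j ∧ ¬ j.val = 0} ≤ #{j | ¬ P j} := by
    refine card_le_card_of_injOn (fun j => ⟨j.val - 1, by omega⟩) (fun j hj => ?_)
      fun j hj j' hj' hjj' => ?_
    · obtain ⟨hPj, hj0⟩ := (mem_filter.1 hj).2
      exact mem_filter.2 ⟨mem_univ _, fun hP => h _ j (by simp only; omega) hP hPj⟩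
    · have := (mem_filter.1 (mem_coe.1 hj)).2.2
      have := (mem_filter.1 (mem_coe.1 hj')).2.2
      have e := congrArg Fin.val hjj'
      simp only at e
      exact Fin.ext (by omega)
  have hsplit := card_filter_add_card_filter_not (s := ({j | P j} : Finset (Fin n)))
    (fun j => j.val = 0)
  rw [filter_filter, filter_filter] at hsplit
  omega

lemma le_four_mul_card_add_one {κ : Type*} {n : ℕ} {s : ℝ} (S : Finset κ)
    (σ : Fin n → ℝ) (g : Fin n → κ)
    (hσ : ∀ j, σ j ≠ 0 → σ j ∈ ({s, -s} : Finset ℝ)) (hg : ∀ j, g j ∈ S)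
    (hzero : ∀ j j' : Fin n, j.val + 1 = j'.val → σ j = 0 → σ j' ≠ 0)
    (hinj : ∀ j j', j < j' → σ j ≠ 0 → g j = g j' → σ j ≠ σ j') :
    n ≤ 4 * #S + 1 := by
  have hsloped : #{j | σ j ≠ 0} ≤ 2 * #S := by
    calc #{j | σ j ≠ 0} ≤ #(S ×ˢ ({s, -s} : Finset ℝ)) := by
          refine card_le_card_of_injOn (fun j => (g j, σ j))
            (fun j hj => mem_product.2 ⟨hg j, hσ j (mem_filter.1 hj).2⟩)
            fun j hj j' hj' hjj' => ?_
          obtain ⟨hg', hσ'⟩ := Prod.ext_iff.1 hjj'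
          rcases lt_trichotomy j j' with hlt | heq | hgt
          · exact absurd hσ' (hinj j j' hlt (mem_filter.1 (mem_coe.1 hj)).2 hg')
          · exact heq
          · exact absurd hσ'.symm (hinj j' j hgt (mem_filter.1 (mem_coe.1 hj')).2 hg'.symm)
      _ ≤ 2 * #S := by rw [card_product, mul_comm 2]; exact Nat.mul_le_mul_left _ card_le_two
  have hflat := card_filter_le_card_filter_not_add_one (fun j => σ j = 0) hzero
  have hall := card_filter_add_card_filter_not (s := (univ : Finset (Fin n))) (fun j => σ j = 0)
  rw [card_univ, Fintype.card_fin] at hall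
  simp only [ne_eq] at hsloped
  omega

end Combinatorics

section SortedPoints

variable {P : Finset ℝ} {n : ℕ} (hn : P.card = n + 1)

lemma Finset.orderEmbOfFin_zero_eq_zero (h0 : 0 ∈ P)
    (hP : ∀ x ∈ P, x ∈ Set.Icc (0 : ℝ) 1) : P.orderEmbOfFin hn 0 = 0 :=
  (P.orderEmbOfFin_zero hn n.succ_pos).trans
    (le_antisymm (P.min'_le _ h0) (hP _ (P.min'_mem _)).1)

lemma Finset.orderEmbOfFin_last_eq_one (h1 : 1 ∈ P)
    (hP : ∀ x ∈ P, x ∈ Set.Icc (0 : ℝ) 1) : P.orderEmbOfFin hn (Fin.last n) = 1 :=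
  (P.orderEmbOfFin_last hn n.succ_pos).trans
    (le_antisymm (hP _ (P.max'_mem _)).2 (P.le_max' _ h1))

lemma Finset.notMem_Ioo_orderEmbOfFin (j : Fin n) :
    ∀ z ∈ P, z ∉ Set.Ioo (P.orderEmbOfFin hn j.castSucc) (P.orderEmbOfFin hn j.succ) := by
  intro z hz ⟨hlo, hhi⟩
  obtain ⟨l, rfl⟩ : z ∈ Set.range (P.orderEmbOfFin hn) := by rwa [Finset.range_orderEmbOfFin]
  have h₁ := (P.orderEmbOfFin hn).lt_iff_lt.1 hlo
  have h₂ := (P.orderEmbOfFin hn).lt_iff_lt.1 hhi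
  rw [Fin.lt_def] at h₁ h₂
  simp only [Fin.val_castSucc, Fin.val_succ] at h₁ h₂
  omega

lemma pwAffine_of_orderEmbOfFin {G : ℝ → ℝ} (h0 : 0 ∈ P) (h1 : 1 ∈ P)
    (hP : ∀ x ∈ P, x ∈ Icc (0 : ℝ) 1)
    (hG : ∀ j : Fin n,
      AffineOn G (Icc (P.orderEmbOfFin hn j.castSucc) (P.orderEmbOfFin hn j.succ))) :
    PWAffine G n :=
  ⟨P.orderEmbOfFin hn, (P.orderEmbOfFin hn).monotone,
    Finset.orderEmbOfFin_zero_eq_zero hn h0 hP, Finset.orderEmbOfFin_last_eq_one hn h1 hP, hG⟩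

end SortedPoints

/-- Pad the subdivision with copies of its last point `1`; the extra pieces are single points. -/
lemma PWAffine.mono {G : ℝ → ℝ} {n N : ℕ} (hG : PWAffine G n) (hnN : n ≤ N) :
    PWAffine G N := by
  obtain ⟨t, ht, h0, h1, hpiece⟩ := hG
  refine ⟨fun i => t ⟨min i n, by omega⟩,
    fun i j hij => ht (by simp only [Fin.le_def]; omega),
    by simpa using h0, by simpa [Fin.last, hnN] using h1, fun i => ?_⟩
  by_cases hi : i.val < n
  · obtain ⟨a, b, hab⟩ := hpiece ⟨i, hi⟩
    refine ⟨a, b, fun x hx => hab x ?_⟩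
    simpa [Nat.min_eq_left hi.le, Nat.min_eq_left (Nat.succ_le_of_lt hi)] using hx
  · refine ⟨0, G 1, fun x hx => ?_⟩
    simp only [Fin.val_castSucc, Fin.val_succ, Nat.min_eq_right (not_lt.1 hi),
      Nat.min_eq_right (by omega : n ≤ i.val + 1)] at hx
    have : t ⟨n, by omega⟩ = 1 := h1
    rw [le_antisymm (hx.2.trans this.le) (this ▸ hx.1)]
    ring

def trap (s A B C x : ℝ) : ℝ := min (s * x + A) (min B (C - s * x))

def trapLines (s A B C : ℝ) : Fin 3 → ℝ × ℝ := ![(s, A), (0, B), (-s, C)]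

section Trap

variable {s A B C : ℝ}

lemma isLeast_trap (x : ℝ) :
    IsLeast (range fun c => (trapLines s A B C c).1 * x + (trapLines s A B C c).2)
      (trap s A B C x) := by
  unfold trap
  refine ⟨?_, ?_⟩
  · rcases min_cases (s * x + A) (min B (C - s * x)) with ⟨h, -⟩ | ⟨h, -⟩
    · exact ⟨0, by simp [trapLines, h]⟩
    · rw [h]
      rcases min_cases B (C - s * x) with ⟨h', -⟩ | ⟨h', -⟩
      · exact ⟨1, by simp [trapLines, h']⟩
      · exact ⟨2, by simp [trapLines, h']; ring⟩
  · rintro _ ⟨c, rfl⟩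
    fin_cases c <;> simp [trapLines]
    linarith [(min_le_right (s * x + A) _).trans (min_le_right B (C - s * x))]

lemma fst_trapLines_mem (c : Fin 3) (hc : (trapLines s A B C c).1 ≠ 0) :
    (trapLines s A B C c).1 ∈ ({s, -s} : Finset ℝ) := by
  fin_cases c <;> simp [trapLines] at hc ⊢

lemma eq_of_mem_range_trapLines (hs : s ≠ 0) {p q : ℝ × ℝ}
    (hp : p ∈ range (trapLines s A B C)) (hq : q ∈ range (trapLines s A B C)) (h : p.1 = q.1) :
    p = q := by
  obtain ⟨c, rfl⟩ := hp
  obtain ⟨c', rfl⟩ := hq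
  fin_cases c <;> fin_cases c' <;> simp [trapLines] at h ⊢ <;> grind

lemma trap_le_trap_add (hs : 0 ≤ s) (x y : ℝ) :
    trap s A B C y ≤ trap s A B C x + s * |y - x| := by
  obtain ⟨c, hc⟩ := (isLeast_trap (s := s) (A := A) (B := B) (C := C) x).1
  have hy := (isLeast_trap (s := s) (A := A) (B := B) (C := C) y).2 ⟨c, rfl⟩
  simp only at hc hy
  have hslope : |(trapLines s A B C c).1| ≤ s := by
    fin_cases c <;> simp [trapLines, abs_of_nonneg hs, hs]
  nlinarith [abs_nonneg (y - x), le_abs_self ((trapLines s A B C c).1 * (y - x)), abs_mul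
    (trapLines s A B C c).1 (y - x), mul_le_mul_of_nonneg_right hslope (abs_nonneg (y - x))]

lemma trap_eq_of_le_of_eq_ascending (hs : 0 ≤ s) {w y : ℝ}
    (hw : trap s A B C w = s * w + A) (hy : y ≤ w) : trap s A B C y = s * y + A := by
  obtain ⟨hB, hC⟩ := le_min_iff.1 (min_eq_left_iff.1 hw)
  exact min_eq_left (le_min (by nlinarith) (by nlinarith))

lemma trap_eq_of_le_of_eq_descending (hs : 0 ≤ s) {x y : ℝ}
    (hx : trap s A B C x = C - s * x) (hy : x ≤ y) : trap s A B C y = C - s * y := by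
  unfold trap at hx ⊢
  have hA : C - s * x ≤ s * x + A := hx ▸ min_le_left _ _
  have hB : C - s * x ≤ B := hx ▸ (min_le_right _ _).trans (min_le_left _ _)
  rw [min_eq_right (by nlinarith : C - s * y ≤ B), min_eq_right (by nlinarith)]

lemma exists_trap_eq_line_of_gap {u v y₀ : ℝ} (hy₀ : y₀ ∈ Ioo u v)
    (hgap : ∀ c c', crossing (trapLines s A B C c) (trapLines s A B C c') ∉ Ioo u v) :
    ∃ c, ∀ y ∈ Icc u v,
      trap s A B C y = (trapLines s A B C c).1 * y + (trapLines s A B C c).2 :=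
  exists_eqOn_of_isLeast (Ioo_subset_Icc_self hy₀) (fun y _ => isLeast_trap y)
    fun c c' h => line_le_line_on_Icc hy₀ (hgap c c') h

end Trap

def IsTrapEnvelope {ι : Type*} (s : ℝ) (A B C : ι → ℝ) (F : ℝ → ℝ) : Prop :=
  ∀ x ∈ Icc (0 : ℝ) 1, IsGreatest (range fun i => trap s (A i) (B i) (C i) x) (F x)

/-- Between consecutive points of this grid every trap, and hence the envelope, is affine. -/
noncomputable def trapGrid {ι : Type*} [Fintype ι] (s : ℝ) (A B C : ι → ℝ) : Finset ℝ :=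
  insert 0 (insert 1 (Finset.univ.image fun q : (ι × Fin 3) × (ι × Fin 3) =>
    crossing (trapLines s (A q.1.1) (B q.1.1) (C q.1.1) q.1.2)
      (trapLines s (A q.2.1) (B q.2.1) (C q.2.1) q.2.2)))

section TrapEnvelope

variable {ι : Type*} {s : ℝ} {A B C : ι → ℝ} {F : ℝ → ℝ}

lemma zero_mem_trapGrid [Fintype ι] : (0 : ℝ) ∈ trapGrid s A B C :=
  Finset.mem_insert_self _ _

lemma one_mem_trapGrid [Fintype ι] : (1 : ℝ) ∈ trapGrid s A B C :=
  Finset.mem_insert_of_mem (Finset.mem_insert_self _ _)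

lemma crossing_mem_trapGrid [Fintype ι] (i j : ι) (c c' : Fin 3) :
    crossing (trapLines s (A i) (B i) (C i) c) (trapLines s (A j) (B j) (C j) c') ∈
      trapGrid s A B C :=
  Finset.mem_insert_of_mem (Finset.mem_insert_of_mem
    (Finset.mem_image_of_mem _ (Finset.mem_univ ((i, c), (j, c')))))

lemma IsTrapEnvelope.le_add (hF : IsTrapEnvelope s A B C F) (hs : 0 ≤ s) {x y : ℝ}
    (hx : x ∈ Icc (0 : ℝ) 1) (hy : y ∈ Icc (0 : ℝ) 1) : F y ≤ F x + s * |y - x| := by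
  obtain ⟨i, hi : trap s (A i) (B i) (C i) y = F y⟩ := (hF y hy).1
  linarith [trap_le_trap_add (A := A i) (B := B i) (C := C i) hs x y, (hF x hx).2 ⟨i, rfl⟩]

lemma IsTrapEnvelope.exists_eq_line_of_gap [Fintype ι] (hF : IsTrapEnvelope s A B C F)
    {u v : ℝ} (hu : 0 ≤ u) (huv : u < v) (hv : v ≤ 1)
    (hgap : ∀ z ∈ trapGrid s A B C, z ∉ Ioo u v) :
    ∃ i, ∃ p ∈ range (trapLines s (A i) (B i) (C i)), ∀ y ∈ Icc u v,
      F y = trap s (A i) (B i) (C i) y ∧ trap s (A i) (B i) (C i) y = p.1 * y + p.2 := by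
  have hmid : (u + v) / 2 ∈ Ioo u v := ⟨by linarith, by linarith⟩
  choose c hc using fun i => exists_trap_eq_line_of_gap (s := s) (A := A i) (B := B i)
    (C := C i) hmid fun c c' => hgap _ (crossing_mem_trapGrid i i c c')
  obtain ⟨i, hi⟩ := exists_eqOn_of_isGreatest (Ioo_subset_Icc_self hmid)
    (fun y hy => hF y ⟨hu.trans hy.1, hy.2.trans hv⟩) fun i j hij y hy => by
      rw [hc i y hy, hc j y hy]
      rw [hc i _ (Ioo_subset_Icc_self hmid), hc j _ (Ioo_subset_Icc_self hmid)] at hij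
      exact line_le_line_on_Icc hmid (hgap _ (crossing_mem_trapGrid i j _ _)) hij y hy
  exact ⟨i, _, ⟨c i, rfl⟩, fun y hy => ⟨hi y hy, hc i y hy⟩⟩

lemma IsTrapEnvelope.affineOn_of_affineNear [Fintype ι] (hF : IsTrapEnvelope s A B C F)
    {p q : ℝ} (hp : 0 ≤ p) (hpq : p < q) (hq : q ≤ 1)
    (hnear : ∀ z ∈ trapGrid s A B C, z ∈ Ioo p q → AffineNear F z) :
    AffineOn F (Icc p q) :=
  affineOn_Icc_of_gaps hpq _ (fun u v hu huv hv hgap => by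
    obtain ⟨i, p, -, h⟩ := hF.exists_eq_line_of_gap (hp.trans hu) huv (hv.trans hq) hgap
    exact ⟨p.1, p.2, fun y hy => (h y hy).1.trans (h y hy).2⟩) hnear

lemma IsTrapEnvelope.exists_piece_witness [Fintype ι] (hF : IsTrapEnvelope s A B C F)
    {x y : ℝ} (hx : 0 ≤ x) (hxy : x < y) (hy : y ≤ 1) (hyX : y ∈ trapGrid s A B C)
    (hxy' : AffineOn F (Icc x y)) :
    ∃ i, ∃ p ∈ range (trapLines s (A i) (B i) (C i)), ∃ w, x < w ∧ w ≤ y ∧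
      (∀ z ∈ Icc x y, F z = p.1 * z + p.2) ∧
      ∀ z ∈ Icc x w, trap s (A i) (B i) (C i) z = p.1 * z + p.2 := by
  obtain ⟨w, -, hxw, hwy, hgap⟩ := (trapGrid s A B C).exists_next_mem hyX hxy
  obtain ⟨i, p, hp, h⟩ := hF.exists_eq_line_of_gap hx hxw (hwy.trans hy) hgap
  obtain ⟨a, b, hab⟩ := hxy'
  have hline : ∀ z ∈ Icc x w, F z = p.1 * z + p.2 := fun z hz => (h z hz).1.trans (h z hz).2
  obtain ⟨rfl, rfl⟩ := affine_coeffs_eq hxw.ne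
    ((hab x ⟨le_rfl, hxy.le⟩).symm.trans (hline x ⟨le_rfl, hxw.le⟩))
    ((hab w ⟨hxw.le, hwy⟩).symm.trans (hline w ⟨hxw.le, le_rfl⟩))
  exact ⟨i, p, hp, w, hxw, hwy, hab, fun z hz => (h z hz).2⟩

/-- The trap stays on its sloped line on one side of a contact point, and the `s`-Lipschitz
bound keeps `F` below the line on the other side. -/
lemma IsTrapEnvelope.eqOn_of_trapLine (hF : IsTrapEnvelope s A B C F) (hs : 0 ≤ s) {i : ι}
    {p : ℝ × ℝ} (hp : p ∈ range (trapLines s (A i) (B i) (C i))) (hp₀ : p.1 ≠ 0)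
    {x w : ℝ} (hx : 0 ≤ x) (hxw : x ≤ w) (hw : w ≤ 1)
    (hFx : F x = p.1 * x + p.2) (hFw : F w = p.1 * w + p.2)
    (htx : trap s (A i) (B i) (C i) x = p.1 * x + p.2)
    (htw : trap s (A i) (B i) (C i) w = p.1 * w + p.2) :
    ∀ y ∈ Icc x w, F y = p.1 * y + p.2 := by
  intro y hy
  have hx' : x ∈ Icc (0 : ℝ) 1 := ⟨hx, hxw.trans hw⟩
  have hw' : w ∈ Icc (0 : ℝ) 1 := ⟨hx.trans hxw, hw⟩
  have hy' : y ∈ Icc (0 : ℝ) 1 := ⟨hx.trans hy.1, hy.2.trans hw⟩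
  have hFy := (hF y hy').2 ⟨i, rfl⟩
  obtain ⟨c, rfl⟩ := hp
  fin_cases c <;> simp only [trapLines, Fin.zero_eta, Fin.mk_one, Fin.reduceFinMk,
    Matrix.cons_val] at hp₀ htx htw hFx hFw ⊢
  · have hray := trap_eq_of_le_of_eq_ascending hs htw hy.2
    have hlip := hF.le_add hs hx' hy'
    rw [abs_of_nonneg (by linarith [hy.1])] at hlip
    simp only at hFy
    linarith
  · exact absurd rfl hp₀
  · have hray := trap_eq_of_le_of_eq_descending hs (by linarith) hy.1
    have hlip := hF.le_add hs hw' hy'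
    rw [abs_of_nonpos (by linarith [hy.2])] at hlip
    simp only at hFy
    linarith

end TrapEnvelope

open scoped Classical in
noncomputable def breakpoints (F : ℝ → ℝ) (X : Finset ℝ) : Finset ℝ :=
  insert 0 (insert 1 (X.filter fun x => x ∈ Ioo 0 1 ∧ ¬ AffineNear F x))

section Breakpoints

variable {F : ℝ → ℝ} {X : Finset ℝ}

lemma zero_mem_breakpoints : (0 : ℝ) ∈ breakpoints F X := Finset.mem_insert_self _ _

lemma one_mem_breakpoints : (1 : ℝ) ∈ breakpoints F X :=
  Finset.mem_insert_of_mem (Finset.mem_insert_self _ _)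

lemma mem_Icc_of_mem_breakpoints {x : ℝ} (hx : x ∈ breakpoints F X) :
    x ∈ Icc (0 : ℝ) 1 := by
  simp only [breakpoints, Finset.mem_insert, Finset.mem_filter] at hx
  rcases hx with rfl | rfl | ⟨-, hx, -⟩
  exacts [⟨le_rfl, zero_le_one⟩, ⟨zero_le_one, le_rfl⟩, Ioo_subset_Icc_self hx]

lemma mem_of_mem_breakpoints (h0 : 0 ∈ X) (h1 : 1 ∈ X) {x : ℝ} (hx : x ∈ breakpoints F X) :
    x ∈ X := by
  simp only [breakpoints, Finset.mem_insert, Finset.mem_filter] at hx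
  rcases hx with rfl | rfl | ⟨hx, -⟩
  exacts [h0, h1, hx]

lemma not_affineNear_of_mem_breakpoints {x : ℝ} (hx : x ∈ breakpoints F X)
    (hx' : x ∈ Ioo (0 : ℝ) 1) : ¬ AffineNear F x := by
  simp only [breakpoints, Finset.mem_insert, Finset.mem_filter] at hx
  rcases hx with rfl | rfl | ⟨-, -, hx⟩
  exacts [(lt_irrefl _ hx'.1).elim, (lt_irrefl _ hx'.2).elim, hx]

lemma not_affineNear_orderEmbOfFin {n : ℕ} (hn : (breakpoints F X).card = n + 1)
    {l : Fin (n + 1)} (hl₀ : l ≠ 0) (hl : l ≠ Fin.last n) :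
    ¬ AffineNear F ((breakpoints F X).orderEmbOfFin hn l) := by
  have hP : ∀ x ∈ breakpoints F X, x ∈ Icc (0 : ℝ) 1 := fun _ => mem_Icc_of_mem_breakpoints
  refine not_affineNear_of_mem_breakpoints (Finset.orderEmbOfFin_mem _ hn l) ⟨?_, ?_⟩
  · rw [← Finset.orderEmbOfFin_zero_eq_zero hn zero_mem_breakpoints hP]
    exact (Finset.orderEmbOfFin _ hn).strictMono (Fin.pos_iff_ne_zero.2 hl₀)
  · rw [← Finset.orderEmbOfFin_last_eq_one hn one_mem_breakpoints hP]
    exact (Finset.orderEmbOfFin _ hn).strictMono (Fin.lt_last_iff_ne_last.2 hl)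

lemma mem_breakpoints {x : ℝ} (hxX : x ∈ X) (hx : x ∈ Ioo (0 : ℝ) 1)
    (hF : ¬ AffineNear F x) : x ∈ breakpoints F X := by
  simp [breakpoints, hxX, hx, hF]

end Breakpoints

section Pieces

variable {ι : Type*} [Fintype ι] {s : ℝ} {A B C : ι → ℝ} {F : ℝ → ℝ} {n : ℕ}

lemma IsTrapEnvelope.affineOn_piece (hF : IsTrapEnvelope s A B C F)
    (hn : (breakpoints F (trapGrid s A B C)).card = n + 1) (j : Fin n) :
    AffineOn F (Icc ((breakpoints F (trapGrid s A B C)).orderEmbOfFin hn j.castSucc)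
      ((breakpoints F (trapGrid s A B C)).orderEmbOfFin hn j.succ)) := by
  set P := breakpoints F (trapGrid s A B C)
  have ht := fun l => mem_Icc_of_mem_breakpoints (P.orderEmbOfFin_mem hn l)
  refine hF.affineOn_of_affineNear (ht _).1 ((P.orderEmbOfFin hn).strictMono j.castSucc_lt_succ)
    (ht _).2 fun z hzX hz => ?_
  by_contra hnear
  exact P.notMem_Ioo_orderEmbOfFin hn j z
    (mem_breakpoints hzX ⟨(ht _).1.trans_lt hz.1, hz.2.trans_le (ht _).2⟩ hnear) hz

lemma IsTrapEnvelope.card_pieces_le (hF : IsTrapEnvelope s A B C F) (hs : 0 < s)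
    (hn : (breakpoints F (trapGrid s A B C)).card = n + 1) :
    n ≤ 4 * {i | ∃ x ∈ Icc (0 : ℝ) 1, trap s (A i) (B i) (C i) x = F x}.ncard + 1 := by
  classical
  set P := breakpoints F (trapGrid s A B C)
  set t := P.orderEmbOfFin hn
  have ht : ∀ l, t l ∈ Icc (0 : ℝ) 1 :=
    fun l => mem_Icc_of_mem_breakpoints (P.orderEmbOfFin_mem hn l)
  have hbreak : ∀ j j' : Fin n, j < j' → ¬ AffineNear F (t j.succ) := fun j j' hjj' =>
    not_affineNear_orderEmbOfFin hn j.succ_ne_zero (Fin.succ_ne_last_of_lt hjj')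
  choose g p hp w hxw hwy hFp htp using fun j : Fin n =>
    hF.exists_piece_witness (ht _).1 (t.strictMono j.castSucc_lt_succ) (ht _).2
      (mem_of_mem_breakpoints zero_mem_trapGrid one_mem_trapGrid (P.orderEmbOfFin_mem hn _))
      (hF.affineOn_piece hn j)
  have hleft : ∀ j : Fin n, t j.castSucc ∈ Icc (t j.castSucc) (t j.succ) :=
    fun j => ⟨le_rfl, (t.strictMono j.castSucc_lt_succ).le⟩
  rw [Set.ncard_eq_toFinset_card']
  refine le_four_mul_card_add_one (s := s) _ (fun j => (p j).1) g (fun j hj => ?_) (fun j => ?_)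
    (fun j j' hjj' h h' => ?_) fun j j' hjj' hσ hg hσ' => ?_
  · obtain ⟨c, hc⟩ := hp j
    simp only [← hc] at hj ⊢
    exact fst_trapLines_mem c hj
  · exact Set.mem_toFinset.2 ⟨t j.castSucc, ht _,
      (htp j _ ⟨le_rfl, (hxw j).le⟩).trans (hFp j _ (hleft j)).symm⟩
  · have hjj : j'.castSucc = j.succ := Fin.ext (by simp [hjj'])
    exact hbreak j j' (Fin.lt_def.2 (by omega)) (affineNear_of_eqOn_Icc (a := 0)
      (t.strictMono j.castSucc_lt_succ) (hjj ▸ t.strictMono j'.castSucc_lt_succ)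
      (fun y hy => by rw [hFp j y hy, h]) fun y hy => by rw [hFp j' y (hjj ▸ hy), h'])
  · have hpp : p j' = p j := eq_of_mem_range_trapLines hs.ne' (hg ▸ hp j') (hp j) hσ'.symm
    have hlt : t j.succ < w j' :=
      (t.monotone (Fin.succ_le_castSucc_iff.2 hjj')).trans_lt (hxw j')
    have htw := htp j' (w j') ⟨(hxw j').le, le_rfl⟩
    rw [← hg, hpp] at htw
    exact hbreak j j' hjj' ⟨t j.castSucc, w j', t.strictMono j.castSucc_lt_succ, hlt,
      (p j).1, (p j).2, hF.eqOn_of_trapLine hs.le (hp j) hσ (ht _).1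
        ((t.strictMono j.castSucc_lt_succ).trans hlt).le ((hwy j').trans (ht _).2)
        (hFp j _ (hleft j)) (hpp ▸ hFp j' (w j') ⟨(hxw j').le, hwy j'⟩)
        (htp j _ ⟨le_rfl, (hxw j).le⟩) htw⟩

end Pieces

/-- The upper envelope of finitely many trapezoid functions with a common slope `s > 0`
has at most `4k+2` breakpoints (i.e. at most `4k+1` linear pieces), where `k` is the
number of functions attaining the envelope somewhere on `[0,1]`. -/
theorem upper_envelope_breakpoints (m : ℕ) (s : ℝ) (hs : 0 < s)
    (f : Fin (m + 1) → ℝ → ℝ) (hf : ∀ i, IsTrap s (f i)) (F : ℝ → ℝ)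
    (hF : ∀ lam ∈ Icc (0:ℝ) 1, IsGreatest (Set.range fun i => f i lam) (F lam))
    (k : ℕ) (hk : {i : Fin (m + 1) | ∃ lam ∈ Icc (0:ℝ) 1, f i lam = F lam}.ncard = k) :
    PWAffine F (4 * k + 1) := by
  choose A B C hABC using hf
  obtain rfl : f = fun i => trap s (A i) (B i) (C i) := funext fun i => funext (hABC i)
  have hF : IsTrapEnvelope s A B C F := hF
  obtain ⟨n, hn⟩ : ∃ n, (breakpoints F (trapGrid s A B C)).card = n + 1 :=
    Nat.exists_eq_succ_of_ne_zero (Finset.card_ne_zero_of_mem zero_mem_breakpoints)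
  exact (pwAffine_of_orderEmbOfFin hn zero_mem_breakpoints one_mem_breakpoints
    (fun _ => mem_Icc_of_mem_breakpoints) (hF.affineOn_piece hn)).mono
    (hk ▸ hF.card_pieces_le hs hn)
end
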